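/- arXiv:2312.11904 — 12 statements merged into one kernel-verified Lean document; each statement's English description precedes it below -/
import Mathlib

section
/- Let P be a finite poset, n a positive integer, and for each p ∈ P let A_p be a nonempty subset of [n] = {1,...,n}. Let Hom(P,A) be the set of isotone maps f : P → [n] with f(p) ∈ A_p for all p, partially ordered pointwise. If 𝔄 is a poset ideal of Hom(P,A), f, g ∈ 𝔄 are distinct, and k is minimal with f(p_k) ≠ g(p_k) (where p_1,...,p_m is a linear extension of P) and f(p_k) < g(p_k), then the map h defined by h(p_i) = g(p_i) for i ≠ k and h(p_k) = f(p_k) is isotone and belongs to 𝔄. -/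
/-- With `P` encoded as `Fin m` equipped with a partial order `r`
compatible with the linear extension (the natural order of `Fin m`),
`Hom(P,A)` the isotone maps `f` with `f i ∈ A i`, and `𝔄` a poset ideal of it:
if `f ≠ g` in `𝔄`, `k` is minimal with `f k ≠ g k` and `f k < g k`, then
`h = update g k (f k)` is isotone and belongs to `𝔄`. -/
theorem stmt0 (m n : ℕ) (r : Fin m → Fin m → Prop)
    (hrefl : ∀ i, r i i) (htrans : ∀ i j k, r i j → r j k → r i k)
    (hcompat : ∀ i j, r i j → i ≤ j)
    (A : Fin m → Finset (Fin n)) (hA : ∀ i, (A i).Nonempty)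
    (𝔄 : Set (Fin m → Fin n)) (h𝔄ne : 𝔄.Nonempty)
    (hsub : ∀ f ∈ 𝔄, (∀ i, f i ∈ A i) ∧ (∀ i j, r i j → f i ≤ f j))
    (hdown : ∀ f ∈ 𝔄, ∀ g : Fin m → Fin n, (∀ i, g i ∈ A i) →
      (∀ i j, r i j → g i ≤ g j) → (∀ i, g i ≤ f i) → g ∈ 𝔄)
    (f g : Fin m → Fin n) (hf : f ∈ 𝔄) (hg : g ∈ 𝔄) (hfg : f ≠ g)
    (k : Fin m) (hmin : ∀ i, i < k → f i = g i) (hk : f k < g k) :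
    (∀ i j, r i j → Function.update g k (f k) i ≤ Function.update g k (f k) j) ∧
      Function.update g k (f k) ∈ 𝔄 := by
  obtain ⟨hfA, hfmono⟩ := hsub f hf
  obtain ⟨hgA, hgmono⟩ := hsub g hg
  have hiso : ∀ i j, r i j → Function.update g k (f k) i ≤ Function.update g k (f k) j := by
    intro i j hij
    rcases eq_or_ne i k with hi | hi <;> rcases eq_or_ne j k with hj | hj
    · rw [hi, hj]
    · rw [hi, Function.update_self, Function.update_of_ne hj]
      rw [hi] at hij
      exact le_trans hk.le (hgmono k j hij)
    · rw [hj, Function.update_self, Function.update_of_ne hi]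
      rw [hj] at hij
      have hik : i < k := lt_of_le_of_ne (hcompat i k hij) (hj ▸ hi)
      rw [← hmin i hik]
      exact hfmono i k hij
    · rw [Function.update_of_ne hi, Function.update_of_ne hj]
      exact hgmono i j hij
  refine ⟨hiso, hdown g hg _ ?_ hiso ?_⟩
  · intro i
    rcases eq_or_ne i k with hi | hi
    · rw [hi, Function.update_self]; exact hfA k
    · rw [Function.update_of_ne hi]; exact hgA i
  · intro i
    rcases eq_or_ne i k with hi | hi
    · rw [hi, Function.update_self]; exact hk.le
    · rw [Function.update_of_ne hi]
end

section
/- Let P be a finite poset with linear extension p_1,...,p_m, and A_i ⊆ [n] nonempty subsets. Let 𝔄 be a poset ideal of Hom(P,A). Then the monomial ideal L(𝔄) = (∏_{i=1}^m X_{p_i,f(p_i)} : f ∈ 𝔄) in K[X_{p,i} : p ∈ P, i ∈ [n]] is weakly polymatroidal with respect to the variable order X_{p_1,1} > ⋯ > X_{p_1,n} > X_{p_2,1} > ⋯ > X_{p_m,n}. -/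
open MvPolynomial

/-- `d` is (the exponent vector of) a minimal monomial generator of `I`. -/
def IsMinGen {K : Type} [Field K] {σ : Type} (I : Ideal (MvPolynomial σ K))
    (d : σ →₀ ℕ) : Prop :=
  (monomial d (1 : K)) ∈ I ∧
    ∀ d' : σ →₀ ℕ, d' ≤ d → (monomial d' (1 : K)) ∈ I → d' = d

/-- `I` is weakly polymatroidal with respect to the variable order in which
`x` is a larger variable than `y` iff `ord x < ord y`: for minimal generators
`u = X^d`, `v = X^e` agreeing on all variables larger than `X_q` and with
`d q < e q`, there is a smaller variable `X_p` dividing `u` such that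
`X_q · u / X_p` is again a minimal generator. -/
def WeaklyPolymatroidal {K : Type} [Field K] {σ : Type} (ord : σ → ℕ)
    (I : Ideal (MvPolynomial σ K)) : Prop :=
  ∀ d e : σ →₀ ℕ, IsMinGen I d → IsMinGen I e →
    ∀ q : σ, (∀ x : σ, ord x < ord q → d x = e x) → d q < e q →
      ∃ p : σ, ord q < ord p ∧ 0 < d p ∧
        IsMinGen I (d + Finsupp.single q 1 - Finsupp.single p 1)

section Aux

variable {m n : ℕ}

noncomputable def dvec (f : Fin m → Fin n) : Fin m × Fin n →₀ ℕ :=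
  ∑ i : Fin m, Finsupp.single (i, f i) 1

lemma dvec_apply (f : Fin m → Fin n) (x : Fin m × Fin n) :
    dvec f x = if f x.1 = x.2 then 1 else 0 := by
  classical
  rw [dvec, Finsupp.finset_sum_apply, Finset.sum_eq_single x.1]
  · simp [Finsupp.single_apply, Prod.ext_iff]
  · intro i _ hi
    rw [Finsupp.single_apply, if_neg]
    intro h; exact hi (congrArg Prod.fst h)
  · simp

lemma prod_X_eq {K : Type} [Field K] (f : Fin m → Fin n) :
    (∏ i : Fin m, (X (i, f i) : MvPolynomial (Fin m × Fin n) K)) = monomial (dvec f) 1 := by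
  rw [dvec, monomial_sum_one]
  exact Finset.prod_congr rfl fun i _ => rfl

lemma dvec_le (f g : Fin m → Fin n) (h : dvec f ≤ dvec g) : f = g := by
  funext i
  have h2 := Finsupp.le_def.mp h (i, f i)
  rw [dvec_apply, dvec_apply, if_pos rfl] at h2
  by_contra hne
  rw [if_neg (fun h3 => hne h3.symm)] at h2
  omega

end Aux

section Char

variable {m n : ℕ} {K : Type} [Field K]

lemma mem_span_iff (𝔄 : Set (Fin m → Fin n)) (d : Fin m × Fin n →₀ ℕ) :
    (monomial d (1 : K)) ∈ Ideal.span ((fun f : Fin m → Fin n =>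
        ∏ i : Fin m, (X (i, f i) : MvPolynomial (Fin m × Fin n) K)) '' 𝔄) ↔
      ∃ f ∈ 𝔄, dvec f ≤ d := by
  have himg : ((fun f : Fin m → Fin n =>
      ∏ i : Fin m, (X (i, f i) : MvPolynomial (Fin m × Fin n) K)) '' 𝔄)
      = (fun s => monomial s (1 : K)) '' (dvec '' 𝔄) := by
    rw [Set.image_image]
    exact Set.image_congr fun f _ => prod_X_eq f
  rw [himg, mem_ideal_span_monomial_image]
  classical
  simp [support_monomial]

lemma isMinGen_iff (𝔄 : Set (Fin m → Fin n)) (d : Fin m × Fin n →₀ ℕ) :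
    IsMinGen (Ideal.span ((fun f : Fin m → Fin n =>
        ∏ i : Fin m, (X (i, f i) : MvPolynomial (Fin m × Fin n) K)) '' 𝔄)) d ↔
      ∃ f ∈ 𝔄, dvec f = d := by
  constructor
  · rintro ⟨hmem, hmin⟩
    obtain ⟨f, hf, hle⟩ := (mem_span_iff 𝔄 d).mp hmem
    refine ⟨f, hf, hmin _ hle ((mem_span_iff 𝔄 _).mpr ⟨f, hf, le_rfl⟩)⟩
  · rintro ⟨f, hf, rfl⟩
    refine ⟨(mem_span_iff 𝔄 _).mpr ⟨f, hf, le_rfl⟩, fun d' hle hmem => ?_⟩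
    obtain ⟨g, hg, hle'⟩ := (mem_span_iff 𝔄 d').mp hmem
    have : g = f := dvec_le g f (hle'.trans hle)
    subst this
    exact le_antisymm hle hle'

end Char

/-- the generalized co-letterplace ideal `L(𝔄)` is weakly
polymatroidal for the order `X_{p₁,1} > ⋯ > X_{p₁,n} > X_{p₂,1} > ⋯ > X_{pₘ,n}`. -/
theorem stmt1 (K : Type) [Field K] (m n : ℕ) (r : Fin m → Fin m → Prop)
    (hrefl : ∀ i, r i i) (htrans : ∀ i j k, r i j → r j k → r i k)
    (hcompat : ∀ i j, r i j → i ≤ j)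
    (A : Fin m → Finset (Fin n)) (hA : ∀ i, (A i).Nonempty)
    (𝔄 : Set (Fin m → Fin n)) (h𝔄ne : 𝔄.Nonempty)
    (hsub : ∀ f ∈ 𝔄, (∀ i, f i ∈ A i) ∧ (∀ i j, r i j → f i ≤ f j))
    (hdown : ∀ f ∈ 𝔄, ∀ g : Fin m → Fin n, (∀ i, g i ∈ A i) →
      (∀ i j, r i j → g i ≤ g j) → (∀ i, g i ≤ f i) → g ∈ 𝔄) :
    WeaklyPolymatroidal (fun x : Fin m × Fin n => (x.1 : ℕ) * n + (x.2 : ℕ))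
      (Ideal.span ((fun f : Fin m → Fin n =>
        ∏ i : Fin m, (X (i, f i) : MvPolynomial (Fin m × Fin n) K)) '' 𝔄)) := by
  intro d e hd he q hagree hlt
  obtain ⟨f, hf, hdf⟩ := (isMinGen_iff 𝔄 d).mp hd
  obtain ⟨g, hg, hdg⟩ := (isMinGen_iff 𝔄 e).mp he
  subst hdf; subst hdg
  rw [dvec_apply, dvec_apply] at hlt
  -- g q.1 = q.2 and f q.1 ≠ q.2
  have hgq : g q.1 = q.2 := by
    by_contra h; rw [if_neg h] at hlt; omega
  have hfq : f q.1 ≠ q.2 := by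
    intro h; rw [if_pos h, if_pos hgq] at hlt; omega
  -- agreement on earlier rows
  have hsame : ∀ j : Fin m, j < q.1 → f j = g j := by
    intro j hj
    have hord : ((j : ℕ) * n + (f j : ℕ)) < ((q.1 : ℕ) * n + (q.2 : ℕ)) := by
      calc (j : ℕ) * n + (f j : ℕ) < (j : ℕ) * n + n := by
            have := (f j).isLt; omega
        _ = ((j : ℕ) + 1) * n := by ring
        _ ≤ (q.1 : ℕ) * n := Nat.mul_le_mul_right n (by exact_mod_cast hj)
        _ ≤ _ := Nat.le_add_right _ _
    have h1 := hagree (j, f j) hord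
    rw [dvec_apply, dvec_apply, if_pos rfl] at h1
    by_contra hne
    rw [if_neg (fun h3 => hne h3.symm)] at h1
    omega
  -- q.2 < f q.1
  have ha : q.2 < f q.1 := by
    rcases lt_trichotomy (f q.1) q.2 with h | h | h
    · exfalso
      have hord : ((q.1 : ℕ) * n + ((f q.1) : ℕ)) < ((q.1 : ℕ) * n + (q.2 : ℕ)) := by
        have : ((f q.1 : ℕ)) < (q.2 : ℕ) := h
        omega
      have h1 := hagree (q.1, f q.1) hord
      rw [dvec_apply, dvec_apply, if_pos rfl] at h1
      rw [if_neg (fun h3 : g q.1 = f q.1 => hfq (h3 ▸ hgq ▸ rfl))] at h1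
      · omega
    · exact absurd h hfq
    · exact h
  refine ⟨(q.1, f q.1), ?_, ?_, ?_⟩
  · simp only []
    have : (q.2 : ℕ) < (f q.1 : ℕ) := ha
    omega
  · rw [dvec_apply]; simp
  · rw [isMinGen_iff]
    refine ⟨Function.update f q.1 q.2, ?_, ?_⟩
    · refine hdown f hf _ (fun i => ?_) (fun i j hr => ?_) (fun i => ?_)
      · by_cases hi : i = q.1
        · subst hi; rw [Function.update_self, ← hgq]; exact (hsub g hg).1 q.1
        · rw [Function.update_of_ne hi]; exact (hsub f hf).1 i
      · by_cases hi : i = q.1 <;> by_cases hj : j = q.1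
        · subst hi; subst hj; exact le_rfl
        · subst hi
          rw [Function.update_self, Function.update_of_ne hj]
          exact le_of_lt (lt_of_lt_of_le ha ((hsub f hf).2 q.1 j hr))
        · subst hj
          rw [Function.update_self, Function.update_of_ne hi]
          have hij : i < q.1 := lt_of_le_of_ne (hcompat i q.1 hr) hi
          rw [hsame i hij, ← hgq]
          exact (hsub g hg).2 i q.1 hr
        · rw [Function.update_of_ne hi, Function.update_of_ne hj]
          exact (hsub f hf).2 i j hr
      · by_cases hi : i = q.1
        · subst hi; rw [Function.update_self]; exact le_of_lt ha
        · rw [Function.update_of_ne hi]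
    · ext x
      rw [Finsupp.tsub_apply, Finsupp.add_apply, dvec_apply, dvec_apply]
      by_cases hx : x.1 = q.1
      · obtain ⟨j, b⟩ := x
        simp only at hx
        subst hx
        rw [Function.update_self]
        have h1 : (Finsupp.single q (1:ℕ)) (q.1, b) = if q.2 = b then 1 else 0 := by
          rw [Finsupp.single_apply]
          congr 1
          simp [Prod.ext_iff]
        have h2 : (Finsupp.single (q.1, f q.1) (1:ℕ)) (q.1, b) = if f q.1 = b then 1 else 0 := by
          rw [Finsupp.single_apply]
          congr 1
          simp [Prod.ext_iff]
        rw [h1, h2]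
        split_ifs <;> omega
      · rw [Function.update_of_ne hx]
        have h1 : (Finsupp.single q (1:ℕ)) x = 0 := by
          rw [Finsupp.single_apply, if_neg]
          intro h; exact hx (congrArg Prod.fst h).symm
        have h2 : (Finsupp.single (q.1, f q.1) (1:ℕ)) x = 0 := by
          rw [Finsupp.single_apply, if_neg]
          intro h; exact hx (congrArg Prod.fst h).symm
        rw [h1, h2]
        omega
end

section
/- Every weakly polymatroidal monomial ideal has linear quotients. -/
open MvPolynomial

/-- `I` has linear quotients: its (finitely many) minimal monomial generators
can be ordered `u₀, …, u_{t-1}` so that each colon ideal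
`(u₀,…,u_{i-1}) : uᵢ` is generated by variables. -/
def HasLinearQuotients {K : Type} [Field K] {σ : Type}
    (I : Ideal (MvPolynomial σ K)) : Prop :=
  ∃ (t : ℕ) (u : Fin t → (σ →₀ ℕ)), Function.Injective u ∧
    (∀ i, IsMinGen I (u i)) ∧ (∀ d, IsMinGen I d → ∃ i, u i = d) ∧
    ∀ i : Fin t, ∃ S : Set σ,
      (Ideal.span {p | ∃ j : Fin t, j < i ∧ p = monomial (u j) (1 : K)}).colon
          (Ideal.span {monomial (u i) (1 : K)}) =
        Ideal.span ((fun s : σ => (X s : MvPolynomial σ K)) '' S)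

/-!
Order the minimal generators decreasingly in the lexicographic order. If `u_j` precedes `u_i`
and `X_q` is the first variable in which they differ, then `deg_q u_i < deg_q u_j`, and weak
polymatroidality yields the generator `X_q u_i / X_p` with `p > q`, which is lexicographically
larger than `u_i` and hence precedes it. So `X_q` lies in `(u_1, …, u_{i-1}) : u_i` and divides
`u_j / gcd(u_j, u_i)`; for monomial ideals this forces the colon ideal to be generated by the
variables it contains.
-/

theorem Set.Finite.exists_strictAnti_fin {α : Type*} [LinearOrder α] {s : Set α}
    (hs : s.Finite) : ∃ (t : ℕ) (u : Fin t → α), StrictAnti u ∧ Set.range u = s := by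
  classical
  let e := hs.toFinset.orderEmbOfFin rfl
  refine ⟨_, e ∘ Fin.rev, e.strictMono.comp_strictAnti Fin.rev_strictAnti, ?_⟩
  rw [Fin.rev_surjective.range_comp, Finset.range_orderEmbOfFin, hs.coe_toFinset]

theorem Finsupp.toLex_lt_toLex_add_single_sub_single {σ : Type*} [LinearOrder σ]
    (d : σ →₀ ℕ) {q p : σ} (hqp : q < p) :
    toLex d < toLex (d + single q 1 - single p 1) :=
  Finsupp.Lex.lt_iff.mpr ⟨q, fun x hx => by simp [hx.ne', (hx.trans hqp).ne'],
    by simp [hqp.ne]⟩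

namespace MvPolynomial

variable {σ R : Type*} [CommSemiring R]

theorem monomial_one_mem_ideal_span_monomial_image [Nontrivial R] {m : σ →₀ ℕ}
    {s : Set (σ →₀ ℕ)} :
    monomial m (1 : R) ∈ Ideal.span ((fun a => monomial a (1 : R)) '' s) ↔ ∃ a ∈ s, a ≤ m := by
  classical
  rw [mem_ideal_span_monomial_image, support_monomial, if_neg one_ne_zero]
  simp

theorem colon_span_monomial_eq_span_X {s : Set (σ →₀ ℕ)} {d : σ →₀ ℕ}
    (h : ∀ a ∈ s, ∃ q, d q < a q ∧
      X q * monomial d 1 ∈ Ideal.span ((fun a => monomial a (1 : R)) '' s)) :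
    (Ideal.span ((fun a => monomial a (1 : R)) '' s)).colon (Ideal.span {monomial d (1 : R)}) =
      Ideal.span (X '' {q | X q * monomial d 1 ∈
        Ideal.span ((fun a => monomial a (1 : R)) '' s)}) := by
  apply le_antisymm
  · intro f hf
    rw [Ideal.mem_colon_span_singleton, mem_ideal_span_monomial_image] at hf
    rw [mem_ideal_span_X_image]
    intro m hm
    have hmd : m + d ∈ (f * monomial d 1).support := by
      simpa [mem_support_iff, coeff_mul_monomial] using hm
    obtain ⟨a, ha, hle⟩ := hf _ hmd
    obtain ⟨q, hq, hqJ⟩ := h a ha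
    have hleq : a q ≤ m q + d q := hle q
    exact ⟨q, hqJ, by omega⟩
  · rw [Ideal.span_le]
    rintro _ ⟨q, hq, rfl⟩
    exact Ideal.mem_colon_span_singleton.mpr hq

end MvPolynomial

section LinearQuotients

variable {K : Type} [Field K] {σ : Type}

theorem finite_setOf_isMinGen [Finite σ] (I : Ideal (MvPolynomial σ K)) :
    {d | IsMinGen I d}.Finite :=
  IsAntichain.finite_of_partiallyWellOrderedOn (fun _ ha _ hb hne hle => hne (hb.2 _ hle ha.1))
    (Set.isPWO_of_wellQuasiOrderedLE _)

variable [LinearOrder σ] {I : Ideal (MvPolynomial σ K)}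

theorem WeaklyPolymatroidal.exists_exchange {ord : σ → ℕ} (hI : WeaklyPolymatroidal ord I)
    (hord : StrictMono ord) {d e : σ →₀ ℕ} (hd : IsMinGen I d) (he : IsMinGen I e)
    (hde : toLex d < toLex e) :
    ∃ q, d q < e q ∧ ∃ w, IsMinGen I w ∧ toLex d < toLex w ∧ w ≤ d + Finsupp.single q 1 := by
  obtain ⟨q, hagree, hq⟩ := Finsupp.Lex.lt_iff.mp hde
  obtain ⟨p, hqp, -, hw⟩ := hI d e hd he q (fun x hx => hagree x (hord.lt_iff_lt.mp hx)) hq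
  exact ⟨q, hq, _, hw,
    Finsupp.toLex_lt_toLex_add_single_sub_single d (hord.lt_iff_lt.mp hqp), tsub_le_self⟩

theorem hasLinearQuotients_of_exists_exchange (hfin : {d | IsMinGen I d}.Finite)
    (hex : ∀ d e, IsMinGen I d → IsMinGen I e → toLex d < toLex e →
      ∃ q, d q < e q ∧ ∃ w, IsMinGen I w ∧ toLex d < toLex w ∧ w ≤ d + Finsupp.single q 1) :
    HasLinearQuotients I := by
  have hfin' : {d : Lex (σ →₀ ℕ) | IsMinGen I (ofLex d)}.Finite := hfin
  obtain ⟨t, u, hanti, hrange⟩ := hfin'.exists_strictAnti_fin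
  have hgen (i : Fin t) : IsMinGen I (ofLex (u i)) := hrange.subset ⟨i, rfl⟩
  have hall (d : σ →₀ ℕ) (hd : IsMinGen I d) : ∃ i, ofLex (u i) = d := hrange.superset hd
  refine ⟨t, fun i => ofLex (u i), ofLex.injective.comp hanti.injective, hgen, hall, fun i => ?_⟩
  have hset : {p | ∃ j : Fin t, j < i ∧ p = monomial (ofLex (u j)) (1 : K)} =
      (fun a => monomial a (1 : K)) '' ((fun j => ofLex (u j)) '' Set.Iio i) := by
    ext p
    simp [eq_comm]
  rw [hset]
  refine ⟨_, colon_span_monomial_eq_span_X ?_⟩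
  rintro _ ⟨j, hji, rfl⟩
  obtain ⟨q, hq, w, hw, hlt, hle⟩ := hex _ _ (hgen i) (hgen j) (hanti hji)
  obtain ⟨k, rfl⟩ := hall w hw
  refine ⟨q, hq, ?_⟩
  rw [X, monomial_mul, one_mul, add_comm, monomial_one_mem_ideal_span_monomial_image]
  exact ⟨_, ⟨k, hanti.lt_iff_gt.mp hlt, rfl⟩, hle⟩

end LinearQuotients

theorem stmt2_general (K : Type) [Field K] (N : ℕ) (I : Ideal (MvPolynomial (Fin N) K))
    (hwp : WeaklyPolymatroidal (fun s : Fin N => (s : ℕ)) I) :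
    HasLinearQuotients I :=
  hasLinearQuotients_of_exists_exchange (finite_setOf_isMinGen I)
    fun _ _ hd he => hwp.exists_exchange Fin.val_strictMono hd he

/-- every weakly polymatroidal monomial ideal has linear
quotients.  Variables `X_1 > X_2 > ⋯ > X_N` are indexed by `Fin N`. -/
theorem stmt2 (K : Type) [Field K] (N : ℕ) (I : Ideal (MvPolynomial (Fin N) K))
    (G : Set (Fin N →₀ ℕ))
    (hmono : I = Ideal.span ((fun d => monomial d (1 : K)) '' G))
    (hwp : WeaklyPolymatroidal (fun s : Fin N => (s : ℕ)) I) :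
    HasLinearQuotients I :=
  stmt2_general K N I hwp
end

section
/- Let P be a finite poset with linear extension p_1,...,p_m, A_i ⊆ [n] nonempty, and 𝔄 a poset ideal of Hom(P,A) with |A_1| ≥ 2; let a_1 = min(A_1). Set 𝔄_1 = {f ∈ 𝔄 : f(p_1) = a_1} and 𝔄_2 = {f ∈ 𝔄 : f(p_1) ≠ a_1}, with associated monomial ideals J = L(𝔄_1) and K = L(𝔄_2). Then J ∩ K = X_{p_1,a_1}·K. -/
/-!
Write `U_f = ∏ᵢ X_{i, f i}` and `v = (p₁, a₁)`. All ideals involved are monomial ideals, so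
`J ∩ K` is spanned by the monomials divisible by some `U_f` (`f ∈ 𝔄₁`) and some `U_g`
(`g ∈ 𝔄₂`). Since `X_v ∣ U_f` and `X_v ∤ U_g`, any such monomial is divisible by `X_v · U_g`,
which gives `J ∩ K ⊆ X_v · K`. Conversely `X_v · U_g = X_{p₁, g p₁} · U_{g[p₁ ↦ a₁]}`, and
lowering `g` at the minimal element `p₁` to `a₁ = min A₁` stays inside the poset ideal `𝔄`,
so `X_v · K ⊆ J`.
-/

open MvPolynomial Finsupp

theorem Function.update_mem_of_forall_rel_eq {ι α : Type*} [DecidableEq ι] [Preorder α]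
    {r : ι → ι → Prop} {A : ι → Finset α} {𝔄 : Set (ι → α)}
    (hsub : ∀ f ∈ 𝔄, (∀ i, f i ∈ A i) ∧ (∀ i j, r i j → f i ≤ f j))
    (hdown : ∀ f ∈ 𝔄, ∀ g : ι → α, (∀ i, g i ∈ A i) →
      (∀ i j, r i j → g i ≤ g j) → (∀ i, g i ≤ f i) → g ∈ 𝔄)
    {g : ι → α} (hg : g ∈ 𝔄) {i₀ : ι} (hi₀ : ∀ i, r i i₀ → i = i₀)
    {a : α} (ha : a ∈ A i₀) (hag : a ≤ g i₀) :
    Function.update g i₀ a ∈ 𝔄 := by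
  obtain ⟨hgA, hgmono⟩ := hsub g hg
  refine hdown g hg _ (fun i => ?_) (fun i j hij => ?_) (fun i => ?_)
  · rcases eq_or_ne i i₀ with rfl | hi
    · simpa using ha
    · simpa [hi] using hgA i
  · rcases eq_or_ne j i₀ with rfl | hj
    · obtain rfl := hi₀ i hij
      rfl
    rw [Function.update_of_ne hj]
    rcases eq_or_ne i i₀ with rfl | hi
    · simpa using hag.trans (hgmono _ _ hij)
    · simpa [hi] using hgmono i j hij
  · rcases eq_or_ne i i₀ with rfl | hi
    · simpa using hag
    · simp [hi]

namespace MvPolynomial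

section MonomialIdeal

variable {σ R : Type*} [CommSemiring R]

theorem span_singleton_X_mul_span_monomial (v : σ) (T : Set (σ →₀ ℕ)) :
    Ideal.span {X v} * Ideal.span ((fun t => monomial t (1 : R)) '' T) =
      Ideal.span ((fun t => monomial t (1 : R)) '' ((single v 1 + ·) '' T)) := by
  rw [Ideal.span_mul_span', Set.singleton_mul, Set.image_image, Set.image_image]
  simp only [X, monomial_mul, one_mul]

theorem inf_span_monomial_le_span_X_mul {S T : Set (σ →₀ ℕ)} {v : σ}
    (hS : ∀ s ∈ S, 1 ≤ s v) (hT : ∀ t ∈ T, t v = 0) :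
    Ideal.span ((fun s => monomial s (1 : R)) '' S) ⊓
        Ideal.span ((fun t => monomial t (1 : R)) '' T) ≤
      Ideal.span {X v} * Ideal.span ((fun t => monomial t (1 : R)) '' T) := by
  rintro x ⟨hxS, hxT⟩
  rw [SetLike.mem_coe, mem_ideal_span_monomial_image] at hxS hxT
  rw [span_singleton_X_mul_span_monomial, mem_ideal_span_monomial_image]
  intro d hd
  obtain ⟨s, hs, hsd⟩ := hxS d hd
  obtain ⟨t, ht, htd⟩ := hxT d hd
  refine ⟨_, ⟨t, ht, rfl⟩, fun w => ?_⟩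
  rcases eq_or_ne w v with rfl | hw
  · simpa [hT t ht] using (hS s hs).trans (hsd w)
  · simpa [single_apply, hw.symm] using htd w

end MonomialIdeal

section Graph

variable {ι α R : Type*} [Fintype ι] [CommSemiring R]

theorem image_prod_X_graph (S : Set (ι → α)) :
    (fun f => ∏ i, (X (i, f i) : MvPolynomial (ι × α) R)) '' S =
      (fun d => monomial d 1) '' ((fun f => ∑ i, single (i, f i) 1) '' S) := by
  rw [Set.image_image]
  exact Set.image_congr fun f _ => (monomial_sum_one _ _).symm

theorem sum_single_graph_apply [DecidableEq ι] [DecidableEq α] (f : ι → α) (i₀ : ι) (a : α) :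
    (∑ i, single (i, f i) 1 : ι × α →₀ ℕ) (i₀, a) = if f i₀ = a then 1 else 0 := by
  rw [finsetSum_apply, Finset.sum_eq_single i₀ (fun i _ hi => by simp [hi])
    (by simp)]
  simp [single_apply]

theorem X_mul_prod_X_graph_update [DecidableEq ι] (g : ι → α) (i₀ : ι) (a : α) :
    X (i₀, a) * ∏ i, (X (i, g i) : MvPolynomial (ι × α) R) =
      X (i₀, g i₀) * ∏ i, X (i, Function.update g i₀ a i) := by
  rw [Fintype.prod_eq_mul_prod_compl i₀, Fintype.prod_eq_mul_prod_compl i₀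
    (fun i => X (i, Function.update g i₀ a i)), Function.update_self]
  have hcompl : ∀ i ∈ ({i₀}ᶜ : Finset ι),
      (X (i, Function.update g i₀ a i) : MvPolynomial (ι × α) R) = X (i, g i) :=
    fun i hi => by rw [Function.update_of_ne (by simpa using hi)]
  rw [Finset.prod_congr rfl hcompl]
  ring

end Graph

end MvPolynomial

theorem stmt3_general (K : Type) [Field K] (m n : ℕ) (hm : 0 < m)
    (r : Fin m → Fin m → Prop)
    (hcompat : ∀ i j, r i j → i ≤ j)
    (A : Fin m → Finset (Fin n))
    (𝔄 : Set (Fin m → Fin n))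
    (hsub : ∀ f ∈ 𝔄, (∀ i, f i ∈ A i) ∧ (∀ i j, r i j → f i ≤ f j))
    (hdown : ∀ f ∈ 𝔄, ∀ g : Fin m → Fin n, (∀ i, g i ∈ A i) →
      (∀ i j, r i j → g i ≤ g j) → (∀ i, g i ≤ f i) → g ∈ 𝔄)
    (a1 : Fin n) (ha1 : a1 ∈ A ⟨0, hm⟩) (ha1min : ∀ b ∈ A ⟨0, hm⟩, a1 ≤ b) :
    (Ideal.span ((fun f : Fin m → Fin n =>
        ∏ i : Fin m, (X (i, f i) : MvPolynomial (Fin m × Fin n) K)) ''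
          {f ∈ 𝔄 | f ⟨0, hm⟩ = a1})) ⊓
      (Ideal.span ((fun f : Fin m → Fin n =>
        ∏ i : Fin m, (X (i, f i) : MvPolynomial (Fin m × Fin n) K)) ''
          {f ∈ 𝔄 | f ⟨0, hm⟩ ≠ a1})) =
    Ideal.span {(X ((⟨0, hm⟩ : Fin m), a1) : MvPolynomial (Fin m × Fin n) K)} *
      Ideal.span ((fun f : Fin m → Fin n =>
        ∏ i : Fin m, (X (i, f i) : MvPolynomial (Fin m × Fin n) K)) ''
          {f ∈ 𝔄 | f ⟨0, hm⟩ ≠ a1}) := by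
  classical
  set p₀ : Fin m := ⟨0, hm⟩
  have hmin : ∀ i, r i p₀ → i = p₀ := fun i hi => le_antisymm (hcompat i p₀ hi) (Nat.zero_le _)
  refine le_antisymm ?_ (le_inf ?_ Ideal.mul_le_right)
  · rw [image_prod_X_graph, image_prod_X_graph]
    refine inf_span_monomial_le_span_X_mul ?_ ?_
    · rintro _ ⟨f, ⟨-, hf⟩, rfl⟩
      simp [sum_single_graph_apply, hf]
    · rintro _ ⟨g, ⟨-, hg⟩, rfl⟩
      simp [sum_single_graph_apply, hg]
  · rw [Ideal.span_mul_span', Set.singleton_mul, Ideal.span_le]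
    rintro _ ⟨_, ⟨g, ⟨hg, -⟩, rfl⟩, rfl⟩
    dsimp only
    rw [X_mul_prod_X_graph_update g p₀ a1]
    refine Ideal.mul_mem_left _ _ (Ideal.subset_span ⟨_, ⟨?_, Function.update_self ..⟩, rfl⟩)
    exact Function.update_mem_of_forall_rel_eq hsub hdown hg hmin ha1
      (ha1min _ ((hsub g hg).1 p₀))

/-- with `p₁` the first element of the linear extension (index `0`),
`a₁ = min A₁`, `𝔄₁ = {f ∈ 𝔄 : f p₁ = a₁}`, `𝔄₂ = {f ∈ 𝔄 : f p₁ ≠ a₁}`,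
`J = L(𝔄₁)`, `K = L(𝔄₂)`, one has `J ∩ K = X_{p₁,a₁}·K`. -/
theorem stmt3 (K : Type) [Field K] (m n : ℕ) (hm : 0 < m)
    (r : Fin m → Fin m → Prop)
    (hrefl : ∀ i, r i i) (htrans : ∀ i j k, r i j → r j k → r i k)
    (hcompat : ∀ i j, r i j → i ≤ j)
    (A : Fin m → Finset (Fin n)) (hA : ∀ i, (A i).Nonempty)
    (𝔄 : Set (Fin m → Fin n)) (h𝔄ne : 𝔄.Nonempty)
    (hsub : ∀ f ∈ 𝔄, (∀ i, f i ∈ A i) ∧ (∀ i j, r i j → f i ≤ f j))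
    (hdown : ∀ f ∈ 𝔄, ∀ g : Fin m → Fin n, (∀ i, g i ∈ A i) →
      (∀ i j, r i j → g i ≤ g j) → (∀ i, g i ≤ f i) → g ∈ 𝔄)
    (hA1 : 2 ≤ (A ⟨0, hm⟩).card)
    (a1 : Fin n) (ha1 : a1 ∈ A ⟨0, hm⟩) (ha1min : ∀ b ∈ A ⟨0, hm⟩, a1 ≤ b) :
    (Ideal.span ((fun f : Fin m → Fin n =>
        ∏ i : Fin m, (X (i, f i) : MvPolynomial (Fin m × Fin n) K)) ''
          {f ∈ 𝔄 | f ⟨0, hm⟩ = a1})) ⊓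
      (Ideal.span ((fun f : Fin m → Fin n =>
        ∏ i : Fin m, (X (i, f i) : MvPolynomial (Fin m × Fin n) K)) ''
          {f ∈ 𝔄 | f ⟨0, hm⟩ ≠ a1})) =
    Ideal.span {(X ((⟨0, hm⟩ : Fin m), a1) : MvPolynomial (Fin m × Fin n) K)} *
      Ideal.span ((fun f : Fin m → Fin n =>
        ∏ i : Fin m, (X (i, f i) : MvPolynomial (Fin m × Fin n) K)) ''
          {f ∈ 𝔄 | f ⟨0, hm⟩ ≠ a1}) :=
  stmt3_general K m n hm r hcompat A 𝔄 hsub hdown a1 ha1 ha1min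
end

section
/- Under the standing conventions, for each t ≥ 1 and each tuple (K_1,...,K_m) with ∅ ≠ K_i ⊆ A_i, |K_1|+⋯+|K_m| = m+t, max(K_i) ≤ min(K_j) whenever p_i < p_j, and (max K_1,...,max K_m) ∈ 𝔄, the differential defined by d_t([K_1,...,K_m]) = Σ_{X_{p_i,a} ∈ Ω} (−1)^{σ(X_{p_i,a},Ω̄)} X_{p_i,a} [K_1,...,K_i∖{a},...,K_m] satisfies d_{t−1} ∘ d_t = 0, where Ω = {X_{p_i,a} : |K_i| ≥ 2, a ∈ K_i}, Ω̄ = {X_{p_i,a} : a ∈ K_i}, and σ(X_{p_i,a}, Ω̄) counts elements of Ω̄ strictly larger than X_{p_i,a} in the order X_{p_i,a} > X_{p_j,b} iff i < j, or i = j and a < b. -/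
open MvPolynomial

noncomputable section

variable (K : Type) [Field K] (m n : ℕ)

/-- Ambient free module with basis all symbols `[K₁,…,Kₘ]`
(tuples of finsets `Kf : Fin m → Finset (Fin n)`). -/
abbrev SymbMod := (Fin m → Finset (Fin n)) →₀ MvPolynomial (Fin m × Fin n) K

/-- `σ(X_{pᵢ,a}, Ω̄)`: the number of pairs `(j,b)` with `b ∈ Kf j` that are
larger than `(i,a)` in the order `X_{pᵢ,a} > X_{pⱼ,b}` iff `i < j` or
(`i = j` and `a < b`). -/
def sgn (Kf : Fin m → Finset (Fin n)) (i : Fin m) (a : Fin n) : ℕ :=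
  (∑ j ∈ Finset.univ.filter (fun j : Fin m => j < i), (Kf j).card) +
    ((Kf i).filter (fun b => b < a)).card

/-- The differential `d([K₁,…,Kₘ]) = Σ_{|Kᵢ|≥2, a ∈ Kᵢ} (−1)^σ X_{pᵢ,a}
[K₁,…,Kᵢ∖{a},…,Kₘ]`, defined on the ambient free module. -/
def Dmap : SymbMod K m n →ₗ[MvPolynomial (Fin m × Fin n) K] SymbMod K m n :=
  Finsupp.linearCombination (MvPolynomial (Fin m × Fin n) K)
    (fun Kf : Fin m → Finset (Fin n) =>
      ∑ i : Fin m, ∑ a ∈ Kf i,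
        if 2 ≤ (Kf i).card then
          ((-1 : MvPolynomial (Fin m × Fin n) K) ^ (sgn m n Kf i a) *
              X (i, a)) •
            Finsupp.single (Function.update Kf i ((Kf i).erase a))
              (1 : MvPolynomial (Fin m × Fin n) K)
        else 0)

/-- The four conditions on a basis symbol `[K₁,…,Kₘ]` at homological degree `t`. -/
def Cond (r : Fin m → Fin m → Prop) (A : Fin m → Finset (Fin n))
    (𝔄 : Set (Fin m → Fin n)) (t : ℕ) (Kf : Fin m → Finset (Fin n)) : Prop :=
  (∀ i, Kf i ⊆ A i) ∧ (∀ i, (Kf i).Nonempty) ∧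
    (∑ i, (Kf i).card) = m + t ∧
    (∀ i j, r i j → i ≠ j → ∀ a ∈ Kf i, ∀ b ∈ Kf j, a ≤ b) ∧
    (∃ g ∈ 𝔄, ∀ i, g i ∈ Kf i ∧ ∀ a ∈ Kf i, a ≤ g i)


/-- One step of the differential on a basis symbol, indexed by the pair `(i,a)`. -/
def dterm (Kf : Fin m → Finset (Fin n)) (p : Fin m × Fin n) : SymbMod K m n :=
  if p.2 ∈ Kf p.1 ∧ 2 ≤ (Kf p.1).card then
    ((-1 : MvPolynomial (Fin m × Fin n) K) ^ (sgn m n Kf p.1 p.2) * X p) •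
      Finsupp.single (Function.update Kf p.1 ((Kf p.1).erase p.2))
        (1 : MvPolynomial (Fin m × Fin n) K)
  else 0

lemma Dmap_single (Kf : Fin m → Finset (Fin n)) :
    Dmap K m n (Finsupp.single Kf 1) = ∑ p : Fin m × Fin n, dterm K m n Kf p := by
  rw [Dmap, Finsupp.linearCombination_single, one_smul, Fintype.sum_prod_type]
  refine Finset.sum_congr rfl fun i _ => ?_
  calc ∑ a ∈ Kf i,
        (if 2 ≤ (Kf i).card then
          ((-1 : MvPolynomial (Fin m × Fin n) K) ^ (sgn m n Kf i a) * X (i, a)) •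
            Finsupp.single (Function.update Kf i ((Kf i).erase a))
              (1 : MvPolynomial (Fin m × Fin n) K)
        else 0)
      = ∑ a ∈ Kf i, dterm K m n Kf (i, a) :=
        Finset.sum_congr rfl fun a ha => by simp [dterm, ha]
    _ = ∑ a : Fin n, dterm K m n Kf (i, a) :=
        Finset.sum_subset (Finset.subset_univ _) (fun a _ ha => by simp [dterm, ha])

/-- Two steps of the differential. -/
def dd (Kf : Fin m → Finset (Fin n)) (p q : Fin m × Fin n) : SymbMod K m n :=
  if p.2 ∈ Kf p.1 ∧ 2 ≤ (Kf p.1).card then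
    ((-1 : MvPolynomial (Fin m × Fin n) K) ^ (sgn m n Kf p.1 p.2) * X p) •
      dterm K m n (Function.update Kf p.1 ((Kf p.1).erase p.2)) q
  else 0

lemma Dmap_dterm (Kf : Fin m → Finset (Fin n)) (p : Fin m × Fin n) :
    Dmap K m n (dterm K m n Kf p) = ∑ q : Fin m × Fin n, dd K m n Kf p q := by
  rw [dterm]
  split_ifs with h
  · rw [map_smul, Dmap_single, Finset.smul_sum]
    exact Finset.sum_congr rfl fun q _ => by simp only [dd]; rw [if_pos h]
  · simp [dd, h]

lemma dd_self (Kf : Fin m → Finset (Fin n)) (p : Fin m × Fin n) :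
    dd K m n Kf p p = 0 := by
  simp [dd, dterm]

lemma sgn_update_of_lt (Kf : Fin m → Finset (Fin n)) {i j : Fin m} (h : i < j)
    (B : Finset (Fin n)) (a : Fin n) :
    sgn m n (Function.update Kf j B) i a = sgn m n Kf i a := by
  unfold sgn
  rw [Function.update_of_ne h.ne]
  congr 1
  refine Finset.sum_congr rfl fun k hk => ?_
  rw [Function.update_of_ne (((Finset.mem_filter.mp hk).2.trans h).ne)]

lemma sgn_update_erase_add_one (Kf : Fin m → Finset (Fin n)) {i j : Fin m} (h : i < j)
    {a : Fin n} (ha : a ∈ Kf i) (b : Fin n) :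
    sgn m n (Function.update Kf i ((Kf i).erase a)) j b + 1 = sgn m n Kf j b := by
  unfold sgn
  rw [Function.update_of_ne h.ne']
  have hi : i ∈ Finset.univ.filter (fun k : Fin m => k < j) := by simp [h]
  rw [← Finset.sum_erase_add _ _ hi, ← Finset.sum_erase_add _ (fun k => (Kf k).card) hi]
  have h1 : ∑ k ∈ (Finset.univ.filter (fun k : Fin m => k < j)).erase i,
      ((Function.update Kf i ((Kf i).erase a)) k).card
      = ∑ k ∈ (Finset.univ.filter (fun k : Fin m => k < j)).erase i, (Kf k).card :=
    Finset.sum_congr rfl fun k hk => by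
      rw [Function.update_of_ne (Finset.mem_erase.mp hk).1]
  rw [h1, Function.update_self, Finset.card_erase_of_mem ha]
  have : 1 ≤ (Kf i).card := Finset.card_pos.mpr ⟨a, ha⟩
  omega

lemma sgn_erase_of_gt (Kf : Fin m → Finset (Fin n)) (i : Fin m) {a b : Fin n} (hab : a < b) :
    sgn m n (Function.update Kf i ((Kf i).erase b)) i a = sgn m n Kf i a := by
  unfold sgn
  rw [Function.update_self]
  congr 1
  · refine Finset.sum_congr rfl fun k hk => ?_
    rw [Function.update_of_ne (Finset.mem_filter.mp hk).2.ne]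
  · congr 1
    ext c
    simp only [Finset.mem_filter, Finset.mem_erase]
    constructor
    · rintro ⟨⟨_, hc⟩, hca⟩; exact ⟨hc, hca⟩
    · rintro ⟨hc, hca⟩; exact ⟨⟨(hca.trans hab).ne, hc⟩, hca⟩

lemma sgn_erase_add_one (Kf : Fin m → Finset (Fin n)) (i : Fin m) {a b : Fin n}
    (ha : a ∈ Kf i) (hab : a < b) :
    sgn m n (Function.update Kf i ((Kf i).erase a)) i b + 1 = sgn m n Kf i b := by
  unfold sgn
  rw [Function.update_self]
  have hsum : ∑ k ∈ Finset.univ.filter (fun k : Fin m => k < i),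
      ((Function.update Kf i ((Kf i).erase a)) k).card
      = ∑ k ∈ Finset.univ.filter (fun k : Fin m => k < i), (Kf k).card :=
    Finset.sum_congr rfl fun k hk => by
      rw [Function.update_of_ne (Finset.mem_filter.mp hk).2.ne]
  rw [hsum]
  have he : ((Kf i).erase a).filter (fun c => c < b)
      = ((Kf i).filter (fun c => c < b)).erase a := by
    ext c
    simp only [Finset.mem_filter, Finset.mem_erase]
    tauto
  have hmem : a ∈ (Kf i).filter (fun c => c < b) := Finset.mem_filter.mpr ⟨ha, hab⟩
  rw [he, Finset.card_erase_of_mem hmem]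
  have : 1 ≤ ((Kf i).filter (fun c => c < b)).card := Finset.card_pos.mpr ⟨a, hmem⟩
  omega

lemma coef_cancel {R : Type*} [CommRing R] {x y u v : ℕ} (h : x + y + 1 = u + v)
    (P Q : R) :
    (-1 : R) ^ x * P * ((-1) ^ y * Q) + (-1) ^ u * Q * ((-1) ^ v * P) = 0 := by
  have h2 : (-1 : R) ^ u * (-1) ^ v = -((-1) ^ x * (-1) ^ y) := by
    rw [← pow_add, ← pow_add, ← h, pow_succ]; ring
  calc (-1 : R) ^ x * P * ((-1) ^ y * Q) + (-1) ^ u * Q * ((-1) ^ v * P)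
      = (-1) ^ x * (-1) ^ y * (P * Q) + (-1) ^ u * (-1) ^ v * (P * Q) := by ring
    _ = 0 := by rw [h2]; ring

lemma dd_cancel_of_fst_lt (Kf : Fin m → Finset (Fin n)) {i j : Fin m} {a b : Fin n}
    (h : i < j) :
    dd K m n Kf (i, a) (j, b) + dd K m n Kf (j, b) (i, a) = 0 := by
  have e1 : Function.update Kf i ((Kf i).erase a) j = Kf j :=
    Function.update_of_ne h.ne' _ _
  have e2 : Function.update Kf j ((Kf j).erase b) i = Kf i :=
    Function.update_of_ne h.ne _ _
  simp only [dd, dterm, e1, e2]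
  by_cases hc : (a ∈ Kf i ∧ 2 ≤ (Kf i).card) ∧ (b ∈ Kf j ∧ 2 ≤ (Kf j).card)
  · obtain ⟨c1, c2⟩ := hc
    rw [if_pos c1, if_pos c2, if_pos c2, if_pos c1, smul_smul, smul_smul,
      Function.update_comm h.ne, ← add_smul]
    have hy := sgn_update_erase_add_one m n Kf h c1.1 b
    have hx := sgn_update_of_lt m n Kf h ((Kf j).erase b) a
    rw [coef_cancel (by omega) (X (i, a)) (X (j, b)), zero_smul]
  · rcases not_and_or.mp hc with hA | hB
    · simp [hA]
    · simp [hB]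

lemma ite_smul_ite {M R' : Type*} [Zero M] [SMulZeroClass R' M] {A B : Prop}
    [Decidable A] [Decidable B] (c : R') (x : M) :
    (if A then c • (if B then x else 0) else 0) = if A ∧ B then c • x else 0 := by
  by_cases hA : A <;> by_cases hB : B <;> simp [hA, hB]

lemma dd_cancel_of_snd_lt (Kf : Fin m → Finset (Fin n)) (i : Fin m) {a b : Fin n}
    (hab : a < b) :
    dd K m n Kf (i, a) (i, b) + dd K m n Kf (i, b) (i, a) = 0 := by
  simp only [dd, dterm, Function.update_self]
  by_cases hc : a ∈ Kf i ∧ b ∈ Kf i ∧ 3 ≤ (Kf i).card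
  · obtain ⟨ha, hb, hcard⟩ := hc
    have c1 : a ∈ Kf i ∧ 2 ≤ (Kf i).card := ⟨ha, by omega⟩
    have c2 : b ∈ (Kf i).erase a ∧ 2 ≤ ((Kf i).erase a).card :=
      ⟨Finset.mem_erase.mpr ⟨hab.ne', hb⟩, by rw [Finset.card_erase_of_mem ha]; omega⟩
    have c3 : b ∈ Kf i ∧ 2 ≤ (Kf i).card := ⟨hb, by omega⟩
    have c4 : a ∈ (Kf i).erase b ∧ 2 ≤ ((Kf i).erase b).card :=
      ⟨Finset.mem_erase.mpr ⟨hab.ne, ha⟩, by rw [Finset.card_erase_of_mem hb]; omega⟩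
    rw [if_pos c1, if_pos c2, if_pos c3, if_pos c4, smul_smul, smul_smul,
      Function.update_idem, Function.update_idem,
      Finset.erase_right_comm (a := a) (b := b), ← add_smul]
    have hy := sgn_erase_add_one m n Kf i ha hab
    have hv := sgn_erase_of_gt m n Kf i hab
    rw [coef_cancel (by omega) (X (i, a)) (X (i, b)), zero_smul]
  · have n1 : ¬((a ∈ Kf i ∧ 2 ≤ (Kf i).card) ∧
        b ∈ (Kf i).erase a ∧ 2 ≤ ((Kf i).erase a).card) := fun hcd =>
      hc ⟨hcd.1.1, (Finset.mem_erase.mp hcd.2.1).2, by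
        have := Finset.card_erase_of_mem hcd.1.1
        have := hcd.2.2
        omega⟩
    have n2 : ¬((b ∈ Kf i ∧ 2 ≤ (Kf i).card) ∧
        a ∈ (Kf i).erase b ∧ 2 ≤ ((Kf i).erase b).card) := fun hcd =>
      hc ⟨(Finset.mem_erase.mp hcd.2.1).2, hcd.1.1, by
        have := Finset.card_erase_of_mem hcd.1.1
        have := hcd.2.2
        omega⟩
    rw [ite_smul_ite, ite_smul_ite, if_neg n1, if_neg n2, add_zero]

lemma dd_cancel (Kf : Fin m → Finset (Fin n)) (p q : Fin m × Fin n) :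
    dd K m n Kf p q + dd K m n Kf q p = 0 := by
  obtain ⟨i, a⟩ := p
  obtain ⟨j, b⟩ := q
  rcases eq_or_ne (⟨i, a⟩ : Fin m × Fin n) ⟨j, b⟩ with he | hne
  · rw [he, dd_self, add_zero]
  · rcases lt_trichotomy i j with h | h | h
    · exact dd_cancel_of_fst_lt K m n Kf h
    · subst h
      have hab : a ≠ b := fun e => hne (by rw [e])
      rcases hab.lt_or_gt with h2 | h2
      · exact dd_cancel_of_snd_lt K m n Kf i h2
      · rw [add_comm]; exact dd_cancel_of_snd_lt K m n Kf i h2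
    · rw [add_comm]; exact dd_cancel_of_fst_lt K m n Kf h

lemma DD_zero (Kf : Fin m → Finset (Fin n)) :
    Dmap K m n (Dmap K m n
      (Finsupp.single Kf (1 : MvPolynomial (Fin m × Fin n) K))) = 0 := by
  rw [Dmap_single, map_sum,
    Finset.sum_congr rfl fun p _ => Dmap_dterm K m n Kf p, ← Finset.sum_product']
  refine Finset.sum_ninvolution (fun x => (x.2, x.1)) ?_ ?_ ?_ ?_
  · exact fun x => dd_cancel K m n Kf x.1 x.2
  · intro x h he
    apply h
    have h2 : x.2 = x.1 := congrArg Prod.fst he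
    rw [h2, dd_self]
  · intro x; simp
  · intro x; exact Prod.mk.eta

/-- `d_{t−1} ∘ d_t = 0` on every basis symbol satisfying the four
conditions at degree `t ≥ 1`. -/
theorem stmt6 (r : Fin m → Fin m → Prop)
    (hrefl : ∀ i, r i i) (htrans : ∀ i j k, r i j → r j k → r i k)
    (hcompat : ∀ i j, r i j → i ≤ j)
    (A : Fin m → Finset (Fin n)) (hA : ∀ i, (A i).Nonempty)
    (𝔄 : Set (Fin m → Fin n)) (h𝔄ne : 𝔄.Nonempty)
    (hsub : ∀ f ∈ 𝔄, (∀ i, f i ∈ A i) ∧ (∀ i j, r i j → f i ≤ f j))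
    (hdown : ∀ f ∈ 𝔄, ∀ g : Fin m → Fin n, (∀ i, g i ∈ A i) →
      (∀ i j, r i j → g i ≤ g j) → (∀ i, g i ≤ f i) → g ∈ 𝔄)
    (t : ℕ) (ht : 1 ≤ t) (Kf : Fin m → Finset (Fin n))
    (hK : Cond m n r A 𝔄 t Kf) :
    Dmap K m n (Dmap K m n
      (Finsupp.single Kf (1 : MvPolynomial (Fin m × Fin n) K))) = 0 := by
  exact DD_zero K m n Kf

end
end

section
/- Under the standing conventions, the ideal L(𝔄; k) generated by all products U_{f_1}U_{f_2}⋯U_{f_k} with f_1 ≤ f_2 ≤ ⋯ ≤ f_k in 𝔄 is weakly polymatroidal for every k ≥ 1. -/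
/-!
All generators `U_{f₁} ⋯ U_{f_k}` have degree `k m`, so they form an antichain and are exactly
the minimal generators. Write a generator as a monotone chain `F : Fin k → Hom(P, A)`; the
exponent of `X_{i,b}` counts the `j` with `F j i = b`, and a monotone column `j ↦ F j i` is
determined by these counts. So if the exponent vectors of `F` and `G` agree on all variables
larger than `X_{i,a}` and `G` has the larger exponent at `X_{i,a}`, then `F` and `G` agree in
the rows before `i`, and in row `i` fewer entries of `F` than of `G` are `≤ a`. At the first
`j` with `a < F j i` we have `G j i ≤ a`, and replacing `F j i` by `a` keeps the chain monotone
and `F j` inside `𝔄`: the value `a` is taken by `G`, and isotonicity at the rows `i' < i` (the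
only ones below `i` in `P`) follows from `F j i' = G j i' ≤ G j i ≤ a`. This exchange turns the
generator `d` into `d · X_{i,a} / X_{i, F j i}`.
-/

open MvPolynomial

open Finset

theorem Finsupp.eq_of_le_of_degree_le {σ : Type*} {s t : σ →₀ ℕ} (hst : s ≤ t)
    (hdeg : t.degree ≤ s.degree) : s = t := by
  have hsplit : t = s + (t - s) := (add_tsub_cancel_of_le hst).symm
  have hzero : (t - s).degree = 0 := by
    rw [hsplit, map_add] at hdeg
    omega
  rw [Finsupp.degree_eq_zero_iff, tsub_eq_zero_iff_le] at hzero
  exact le_antisymm hst hzero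

theorem isAntichain_of_degree_eq {σ : Type*} {T : Set (σ →₀ ℕ)} {N : ℕ}
    (hT : ∀ t ∈ T, t.degree = N) : IsAntichain (· ≤ ·) T :=
  fun s hs t ht hne hst =>
    hne (Finsupp.eq_of_le_of_degree_le hst ((hT t ht).trans (hT s hs).symm).le)

theorem monomial_mem_span_monomial_image_iff {K σ : Type*} [CommSemiring K] [Nontrivial K]
    {T : Set (σ →₀ ℕ)} (s : σ →₀ ℕ) :
    monomial s (1 : K) ∈ Ideal.span ((fun t => monomial t (1 : K)) '' T) ↔
      ∃ t ∈ T, t ≤ s := by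
  classical
  simp [mem_ideal_span_monomial_image, support_monomial]

theorem isMinGen_span_monomial_image_iff {K σ : Type} [Field K] {T : Set (σ →₀ ℕ)}
    (hT : IsAntichain (· ≤ ·) T) (d : σ →₀ ℕ) :
    IsMinGen (Ideal.span ((fun t => monomial t (1 : K)) '' T)) d ↔ d ∈ T := by
  simp only [IsMinGen, monomial_mem_span_monomial_image_iff]
  constructor
  · rintro ⟨⟨t, ht, htd⟩, hmin⟩
    rwa [← hmin t htd ⟨t, ht, le_rfl⟩]
  · intro hd
    refine ⟨⟨d, hd, le_rfl⟩, fun d' hd'd ⟨t, ht, htd'⟩ => ?_⟩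
    have htd : t = d := hT.eq ht hd (htd'.trans hd'd)
    exact le_antisymm hd'd (htd ▸ htd')

theorem Monotone.update {ι α : Type*} [PartialOrder ι] [Preorder α] [DecidableEq ι]
    {v : ι → α} (hv : Monotone v) {j : ι} {a : α} (hlo : ∀ j' < j, v j' ≤ a)
    (hhi : a ≤ v j) :
    Monotone (Function.update v j a) := by
  intro j₁ j₂ h
  rcases eq_or_ne j₁ j with h₁ | h₁ <;> rcases eq_or_ne j₂ j with h₂ | h₂
  · simp [h₁, h₂]
  · simpa [h₁, h₂] using hhi.trans (hv (h₁ ▸ h))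
  · simpa [h₁, h₂] using hlo j₁ (lt_of_le_of_ne (h₂ ▸ h) h₁)
  · simpa [h₁, h₂] using hv h

theorem Finset.sum_update_add {ι M : Type*} [AddCommMonoid M] [DecidableEq ι] [Fintype ι]
    (f : ι → M) (j : ι) (b : M) :
    ∑ x, Function.update f j b x + f j = ∑ x, f x + b := by
  rw [sum_update_of_mem (mem_univ j), ← add_sum_erase _ _ (mem_univ j)]
  simp only [sdiff_singleton_eq_erase]
  abel

section Column

variable {κ α : Type*} [Fintype κ] [LinearOrder α]

theorem card_filter_le_eq_sum_card_filter_eq [LocallyFiniteOrderBot α] (v : κ → α) (a : α) :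
    #{j | v j ≤ a} = ∑ b ∈ Iic a, #{j | v j = b} := by
  classical
  rw [card_eq_sum_card_fiberwise (f := v) (t := Iic a) fun j hj => by simpa using hj]
  refine sum_congr rfl fun b hb => congrArg card ?_
  ext j
  simp only [mem_filter, mem_univ, true_and, and_iff_right_iff_imp]
  rintro rfl
  exact mem_Iic.mp hb

theorem card_filter_le_lt_of_card_filter_eq_lt [LocallyFiniteOrderBot α] {v w : κ → α} {a : α}
    (hbelow : ∀ b < a, #{j | v j = b} = #{j | w j = b})
    (hat : #{j | v j = a} < #{j | w j = a}) :
    #{j | v j ≤ a} < #{j | w j ≤ a} := by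
  rw [card_filter_le_eq_sum_card_filter_eq, card_filter_le_eq_sum_card_filter_eq]
  refine sum_lt_sum (fun b hb => ?_) ⟨a, mem_Iic.mpr le_rfl, hat⟩
  rcases (mem_Iic.mp hb).lt_or_eq with hb | rfl
  · exact (hbelow b hb).le
  · exact hat.le

end Column

section MonotoneColumn

variable {k : ℕ} {α : Type*} [LinearOrder α] {v w : Fin k → α}

theorem Monotone.le_iff_lt_card_filter_le (hv : Monotone v) (j : Fin k) (a : α) :
    v j ≤ a ↔ (j : ℕ) < #{j' | v j' ≤ a} := by
  constructor
  · intro h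
    have : Iic j ⊆ ({j' | v j' ≤ a} : Finset (Fin k)) := fun j' hj' => by
      simpa using (hv (mem_Iic.mp hj')).trans h
    simpa using card_le_card this
  · intro h
    by_contra hja
    have : ({j' | v j' ≤ a} : Finset (Fin k)) ⊆ Iio j := fun j' hj' => by
      simp only [mem_filter, mem_univ, true_and] at hj'
      exact mem_Iio.mpr (lt_of_not_ge fun hjj' => hja ((hv hjj').trans hj'))
    simpa using (card_le_card this).trans_lt' h

theorem Monotone.eq_of_card_filter_eq [LocallyFiniteOrderBot α] (hv : Monotone v)
    (hw : Monotone w) (h : ∀ b, #{j | v j = b} = #{j | w j = b}) : v = w := by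
  have hle : ∀ j b, v j ≤ b ↔ w j ≤ b := fun j b => by
    rw [hv.le_iff_lt_card_filter_le, hw.le_iff_lt_card_filter_le,
      card_filter_le_eq_sum_card_filter_eq, card_filter_le_eq_sum_card_filter_eq]
    simp only [h]
  funext j
  exact le_antisymm ((hle j _).mpr le_rfl) ((hle j _).mp le_rfl)

theorem Monotone.exists_lt_of_card_filter_le_lt (hv : Monotone v) (hw : Monotone w) {a : α}
    (h : #{j | v j ≤ a} < #{j | w j ≤ a}) :
    ∃ j, a < v j ∧ (∀ j' < j, v j' ≤ a) ∧ w j ≤ a := by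
  set j : Fin k := ⟨#{j | v j ≤ a}, h.trans_le (card_filter_le _ _ |>.trans (by simp))⟩
  refine ⟨j, lt_of_not_ge fun hj => ?_, fun j' hj' => ?_,
    (hw.le_iff_lt_card_filter_le j a).mpr h⟩
  · exact (lt_irrefl _) ((hv.le_iff_lt_card_filter_le j a).mp hj)
  · exact (hv.le_iff_lt_card_filter_le j' a).mpr hj'

end MonotoneColumn

section Exponent

variable {κ ι α : Type*} [Fintype κ] [Fintype ι]

/-- The exponent vector of `U_f = ∏ i, X_{i, f i}`. -/
noncomputable def graphExponent (f : ι → α) : ι × α →₀ ℕ :=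
  ∑ i, Finsupp.single (i, f i) 1

noncomputable def chainExponent (F : κ → ι → α) : ι × α →₀ ℕ :=
  ∑ j, graphExponent (F j)

theorem prod_prod_X_eq_monomial_chainExponent (K : Type*) [CommSemiring K] (F : κ → ι → α) :
    ∏ j, ∏ i, (X (i, F j i) : MvPolynomial (ι × α) K) = monomial (chainExponent F) 1 := by
  simp only [chainExponent, graphExponent, monomial_sum_one]
  rfl

theorem chainExponent_apply [DecidableEq α] (F : κ → ι → α) (i : ι) (b : α) :
    chainExponent F (i, b) = #{j | F j i = b} := by
  classical
  simp only [chainExponent, graphExponent, Finsupp.finsetSum_apply, Finsupp.single_apply,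
    Prod.mk.injEq, ite_and, card_filter]
  refine sum_congr rfl fun j _ => ?_
  simp

theorem chainExponent_pos [DecidableEq α] (F : κ → ι → α) (j : κ) (i : ι) :
    0 < chainExponent F (i, F j i) := by
  rw [chainExponent_apply]
  exact card_pos.mpr ⟨j, by simp⟩

theorem degree_chainExponent (F : κ → ι → α) :
    (chainExponent F).degree = Fintype.card κ * Fintype.card ι := by
  simp [chainExponent, graphExponent, map_sum]

theorem graphExponent_update_add [DecidableEq ι] (f : ι → α) (i : ι) (a : α) :
    graphExponent (Function.update f i a) + Finsupp.single (i, f i) 1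
      = graphExponent f + Finsupp.single (i, a) 1 := by
  have : (fun i' => Finsupp.single (i', Function.update f i a i') 1)
      = Function.update (fun i' => Finsupp.single (i', f i') 1) i (Finsupp.single (i, a) 1) := by
    funext i'
    rcases eq_or_ne i' i with rfl | h <;> simp [*]
  simpa only [graphExponent, this] using sum_update_add _ i _

theorem chainExponent_update_update_add [DecidableEq κ] [DecidableEq ι] (F : κ → ι → α)
    (j : κ) (i : ι) (a : α) :
    chainExponent (Function.update F j (Function.update (F j) i a))
        + Finsupp.single (i, F j i) 1
      = chainExponent F + Finsupp.single (i, a) 1 := by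
  have : (fun j' => graphExponent (Function.update F j (Function.update (F j) i a) j'))
      = Function.update (fun j' => graphExponent (F j')) j
          (graphExponent (Function.update (F j) i a)) := by
    funext j'
    rcases eq_or_ne j' j with rfl | h <;> simp [*]
  have hsum := sum_update_add (fun j' => graphExponent (F j')) j
    (graphExponent (Function.update (F j) i a))
  simp only [← this] at hsum
  rw [chainExponent, chainExponent, ← add_right_cancel_iff (a := graphExponent (F j)),
    add_right_comm, hsum, add_assoc, graphExponent_update_add]
  abel

end Exponent

def IsHomInto {ι α : Type*} [LE α] (r : ι → ι → Prop) (A : ι → Finset α) (f : ι → α) :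
    Prop :=
  (∀ i, f i ∈ A i) ∧ ∀ i j, r i j → f i ≤ f j

theorem IsHomInto.update {ι α : Type*} [DecidableEq ι] [Preorder α] {r : ι → ι → Prop}
    {A : ι → Finset α} {f : ι → α} (hf : IsHomInto r A f) {i : ι} {a : α}
    (haA : a ∈ A i) (hle : a ≤ f i) (hbelow : ∀ i', r i' i → i' ≠ i → f i' ≤ a) :
    IsHomInto r A (Function.update f i a) := by
  refine ⟨fun i' => ?_, fun i₁ i₂ hr => ?_⟩
  · rcases eq_or_ne i' i with rfl | h
    · simpa using haA
    · simpa [h] using hf.1 i'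
  · rcases eq_or_ne i₁ i with h₁ | h₁ <;> rcases eq_or_ne i₂ i with h₂ | h₂
    · simp [h₁, h₂]
    · simpa [h₁, h₂] using hle.trans (hf.2 i i₂ (h₁ ▸ hr))
    · simpa [h₁, h₂] using hbelow i₁ (h₂ ▸ hr) h₁
    · simpa [h₁, h₂] using hf.2 i₁ i₂ hr

theorem exists_chainExponent_exchange {k m n : ℕ} {r : Fin m → Fin m → Prop}
    {A : Fin m → Finset (Fin n)} {𝔄 : Set (Fin m → Fin n)}
    (hcompat : ∀ i j, r i j → i ≤ j) (hsub : ∀ f ∈ 𝔄, IsHomInto r A f)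
    (hdown : ∀ f ∈ 𝔄, ∀ g : Fin m → Fin n, (∀ i, g i ∈ A i) →
      (∀ i j, r i j → g i ≤ g j) → (∀ i, g i ≤ f i) → g ∈ 𝔄)
    {F G : Fin k → Fin m → Fin n} (hF : ∀ j, F j ∈ 𝔄) (hFmono : Monotone F)
    (hG : ∀ j, G j ∈ 𝔄) (hGmono : Monotone G) {i : Fin m} {a : Fin n}
    (hlow : ∀ i' < i, ∀ b, chainExponent F (i', b) = chainExponent G (i', b))
    (hcol : ∀ b < a, chainExponent F (i, b) = chainExponent G (i, b))
    (hlt : chainExponent F (i, a) < chainExponent G (i, a)) :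
    ∃ j, a < F j i ∧
      ∃ F' : Fin k → Fin m → Fin n, (∀ j, F' j ∈ 𝔄) ∧ Monotone F' ∧
      chainExponent F' + Finsupp.single (i, F j i) 1
        = chainExponent F + Finsupp.single (i, a) 1 := by
  simp only [chainExponent_apply] at hlow hcol hlt
  have hcolF : ∀ i', Monotone fun j => F j i' := fun i' _ _ h => hFmono h i'
  have hcolG : ∀ i', Monotone fun j => G j i' := fun i' _ _ h => hGmono h i'
  obtain ⟨j, hja, hbefore, hGja⟩ := (hcolF i).exists_lt_of_card_filter_le_lt (hcolG i)
    (card_filter_le_lt_of_card_filter_eq_lt hcol hlt)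
  have hagree : ∀ i' < i, F j i' = G j i' := fun i' hi' =>
    congrFun ((hcolF i').eq_of_card_filter_eq (hcolG i') (hlow i' hi')) j
  have haA : a ∈ A i := by
    obtain ⟨j₀, hj₀⟩ := card_pos.mp (Nat.zero_lt_of_lt hlt)
    exact (mem_filter.mp hj₀).2 ▸ (hsub _ (hG j₀)).1 i
  have hhom : IsHomInto r A (Function.update (F j) i a) :=
    (hsub _ (hF j)).update haA hja.le fun i' hr hne => by
      rw [hagree i' (lt_of_le_of_ne (hcompat i' i hr) hne)]
      exact ((hsub _ (hG j)).2 i' i hr).trans hGja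
  refine ⟨j, hja, Function.update F j (Function.update (F j) i a), fun j' => ?_,
    hFmono.update (fun j' hj' => ?_) (update_le_self_iff.mpr hja.le),
    chainExponent_update_update_add F j i a⟩
  · rcases eq_or_ne j' j with rfl | h
    · simpa using hdown _ (hF j') _ hhom.1 hhom.2 (update_le_self_iff.mpr hja.le)
    · simpa [h] using hF j'
  · exact le_update_iff.mpr ⟨hbefore j' hj', fun i' _ => hFmono hj'.le i'⟩

theorem mul_add_lt_mul_add_of_lt {i' i b a n : ℕ} (hi : i' < i) (hb : b < n) :
    i' * n + b < i * n + a := by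
  nlinarith

theorem stmt9_general (K : Type) [Field K] (m n : ℕ) (r : Fin m → Fin m → Prop)
    (hcompat : ∀ i j, r i j → i ≤ j)
    (A : Fin m → Finset (Fin n))
    (𝔄 : Set (Fin m → Fin n))
    (hsub : ∀ f ∈ 𝔄, (∀ i, f i ∈ A i) ∧ (∀ i j, r i j → f i ≤ f j))
    (hdown : ∀ f ∈ 𝔄, ∀ g : Fin m → Fin n, (∀ i, g i ∈ A i) →
      (∀ i j, r i j → g i ≤ g j) → (∀ i, g i ≤ f i) → g ∈ 𝔄)
    (k : ℕ) :
    WeaklyPolymatroidal (fun x : Fin m × Fin n => (x.1 : ℕ) * n + (x.2 : ℕ))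
      (Ideal.span {p : MvPolynomial (Fin m × Fin n) K |
        ∃ F : Fin k → (Fin m → Fin n),
          (∀ j, F j ∈ 𝔄) ∧
          (∀ j j' : Fin k, j ≤ j' → ∀ i, F j i ≤ F j' i) ∧
          p = ∏ j : Fin k, ∏ i : Fin m, X (i, F j i)}) := by
  set T := {s | ∃ F : Fin k → Fin m → Fin n,
    (∀ j, F j ∈ 𝔄) ∧ Monotone F ∧ s = chainExponent F}
  have hgens : {p : MvPolynomial (Fin m × Fin n) K | ∃ F : Fin k → (Fin m → Fin n),
      (∀ j, F j ∈ 𝔄) ∧ (∀ j j' : Fin k, j ≤ j' → ∀ i, F j i ≤ F j' i) ∧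
        p = ∏ j : Fin k, ∏ i : Fin m, X (i, F j i)} = (fun s => monomial s (1 : K)) '' T := by
    ext p
    simp only [T, prod_prod_X_eq_monomial_chainExponent, Set.mem_ofPred_eq, Set.mem_image]
    constructor
    · rintro ⟨F, hF, hmono, rfl⟩
      exact ⟨_, ⟨F, hF, hmono, rfl⟩, rfl⟩
    · rintro ⟨_, ⟨F, hF, hmono, rfl⟩, rfl⟩
      exact ⟨F, hF, hmono, rfl⟩
  have hT : IsAntichain (· ≤ ·) T :=
    isAntichain_of_degree_eq fun s ⟨F, _, _, hs⟩ => hs ▸ degree_chainExponent F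
  rw [hgens]
  intro d e hd he ⟨i, a⟩ hagree hlt
  simp only [isMinGen_span_monomial_image_iff hT] at hd he ⊢
  obtain ⟨F, hF, hFmono, rfl⟩ := hd
  obtain ⟨G, hG, hGmono, rfl⟩ := he
  obtain ⟨j, hja, F', hF', hF'mono, hexch⟩ := exists_chainExponent_exchange hcompat hsub hdown
    hF hFmono hG hGmono (fun i' hi' b => hagree _ (mul_add_lt_mul_add_of_lt hi' b.isLt))
    (fun b hb => hagree _ (Nat.add_lt_add_left hb _)) hlt
  exact ⟨(i, F j i), Nat.add_lt_add_left hja _, chainExponent_pos F j i,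
    F', hF', hF'mono, by rw [← hexch, add_tsub_cancel_right]⟩

/-- the ideal `L(𝔄; k)` generated by the products
`U_{f₁}⋯U_{f_k}` over weakly increasing chains `f₁ ≤ ⋯ ≤ f_k` in `𝔄` is
weakly polymatroidal for every `k ≥ 1`, with respect to the variable order
`X_{p₁,1} > ⋯ > X_{p₁,n} > X_{p₂,1} > ⋯ > X_{pₘ,n}`. -/
theorem stmt9 (K : Type) [Field K] (m n : ℕ) (r : Fin m → Fin m → Prop)
    (hrefl : ∀ i, r i i) (htrans : ∀ i j k, r i j → r j k → r i k)
    (hcompat : ∀ i j, r i j → i ≤ j)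
    (A : Fin m → Finset (Fin n)) (hA : ∀ i, (A i).Nonempty)
    (𝔄 : Set (Fin m → Fin n)) (h𝔄ne : 𝔄.Nonempty)
    (hsub : ∀ f ∈ 𝔄, (∀ i, f i ∈ A i) ∧ (∀ i j, r i j → f i ≤ f j))
    (hdown : ∀ f ∈ 𝔄, ∀ g : Fin m → Fin n, (∀ i, g i ∈ A i) →
      (∀ i j, r i j → g i ≤ g j) → (∀ i, g i ≤ f i) → g ∈ 𝔄)
    (k : ℕ) (hk : 1 ≤ k) :
    WeaklyPolymatroidal (fun x : Fin m × Fin n => (x.1 : ℕ) * n + (x.2 : ℕ))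
      (Ideal.span {p : MvPolynomial (Fin m × Fin n) K |
        ∃ F : Fin k → (Fin m → Fin n),
          (∀ j, F j ∈ 𝔄) ∧
          (∀ j j' : Fin k, j ≤ j' → ∀ i, F j i ≤ F j' i) ∧
          p = ∏ j : Fin k, ∏ i : Fin m, X (i, F j i)}) :=
  stmt9_general K m n r hcompat A 𝔄 hsub hdown k
end

section
/- Let P be a finite poset and k ≥ 1. Define the poset P^k on {p_{i,j} : i ∈ [m], j ∈ [k]} by p_{i_1,j_1} ≤ p_{i_2,j_2} iff p_{i_1} ≤ p_{i_2} in P and j_1 ≤ j_2, with A^k(p_{i,j}) = A_i. Let 𝔄^k be the poset ideal of Hom(P^k, A^k) generated by the maps ḡ with ḡ(p_{i,j}) = g(p_i), g a maximal element of 𝔄. Then the assignment sending a chain f_1 ≤ f_2 ≤ ⋯ ≤ f_k in 𝔄 to the map f(p_{i,j}) = f_j(p_i) is a bijection between the set of weakly increasing k-chains in 𝔄 and 𝔄^k. -/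
/-- the assignment sending a weakly increasing `k`-chain
`f₁ ≤ ⋯ ≤ f_k` in `𝔄` to the map `p_{i,j} ↦ f_j(p_i)` is a bijection from the
set of weakly increasing `k`-chains in `𝔄` onto the poset ideal `𝔄^k` of
`Hom(P^k, A^k)` generated by the maps `ḡ` for `g` a maximal element of `𝔄`.
Here `P^k` has underlying set `Fin m × Fin k` ordered by
`(i₁,j₁) ≤ (i₂,j₂) ↔ p_{i₁} ≤ p_{i₂} ∧ j₁ ≤ j₂` and `A^k (i,j) = A i`,
and `ḡ (i,j) = g i`. -/
theorem stmt10 (m n : ℕ) (r : Fin m → Fin m → Prop)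
    (hrefl : ∀ i, r i i) (htrans : ∀ i j k, r i j → r j k → r i k)
    (hcompat : ∀ i j, r i j → i ≤ j)
    (A : Fin m → Finset (Fin n)) (hA : ∀ i, (A i).Nonempty)
    (𝔄 : Set (Fin m → Fin n)) (h𝔄ne : 𝔄.Nonempty)
    (hsub : ∀ f ∈ 𝔄, (∀ i, f i ∈ A i) ∧ (∀ i j, r i j → f i ≤ f j))
    (hdown : ∀ f ∈ 𝔄, ∀ g : Fin m → Fin n, (∀ i, g i ∈ A i) →
      (∀ i j, r i j → g i ≤ g j) → (∀ i, g i ≤ f i) → g ∈ 𝔄)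
    (k : ℕ) (hk : 1 ≤ k) :
    Set.BijOn (fun (F : Fin k → (Fin m → Fin n)) (x : Fin m × Fin k) => F x.2 x.1)
      {F : Fin k → (Fin m → Fin n) |
        (∀ j, F j ∈ 𝔄) ∧ (∀ j j' : Fin k, j ≤ j' → ∀ i, F j i ≤ F j' i)}
      {h : Fin m × Fin k → Fin n |
        (∀ x : Fin m × Fin k, h x ∈ A x.1) ∧
        (∀ x y : Fin m × Fin k, r x.1 y.1 → x.2 ≤ y.2 → h x ≤ h y) ∧
        (∃ g ∈ 𝔄, (∀ f ∈ 𝔄, (∀ i, g i ≤ f i) → f = g) ∧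
          ∀ x : Fin m × Fin k, h x ≤ g x.1)} := by

  have hmax : ∀ f ∈ 𝔄, ∃ g ∈ 𝔄, (∀ f' ∈ 𝔄, (∀ i, g i ≤ f' i) → f' = g) ∧
      ∀ i, f i ≤ g i := by
    intro f hf
    obtain ⟨g, hfg, hg⟩ := (Set.toFinite 𝔄).exists_le_maximal hf
    exact ⟨g, hg.1, fun f' hf' hle => le_antisymm (hg.2 hf' (fun i => hle i)) hle,
      fun i => hfg i⟩
  constructor
  · -- MapsTo
    intro F hF
    obtain ⟨hF1, hF2⟩ := hF
    have hlast : (⟨k-1, by omega⟩ : Fin k) ∈ Finset.univ := Finset.mem_univ _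
    set last : Fin k := ⟨k-1, by omega⟩ with hl
    obtain ⟨g, hg𝔄, hgmax, hge⟩ := hmax (F last) (hF1 last)
    refine ⟨fun x => (hsub _ (hF1 x.2)).1 x.1,
      fun x y hr hj => le_trans ((hsub _ (hF1 x.2)).2 _ _ hr) (hF2 _ _ hj _),
      g, hg𝔄, hgmax, fun x => le_trans (hF2 x.2 last (by simp only [hl, Fin.le_def]; omega) x.1) (hge x.1)⟩
  constructor
  · -- InjOn
    intro F _ G _ h
    funext j i
    exact congrFun h (i, j)
  · -- SurjOn
    intro h hh
    obtain ⟨h1, h2, g, hg𝔄, hgmax, hge⟩ := hh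
    refine ⟨fun j i => h (i, j), ⟨fun j => hdown g hg𝔄 _ (fun i => h1 (i, j))
      (fun i i' hr => h2 (i, j) (i', j) hr le_rfl) (fun i => hge (i, j)),
      fun j j' hj i => h2 (i, j) (i, j') (hrefl i) hj⟩, ?_⟩
    funext x
    rfl
end

section
/- Let P, A, 𝔄 be as in the standing conventions and k ≥ 2. If L(𝔄; k) = L(𝔄)^k, then 𝔄 is a sublattice of Hom(P, A_1,...,A_m), i.e., 𝔄 is closed under pointwise maximum and pointwise minimum. -/
open MvPolynomial

lemma single_sum_apply' {m n : ℕ} (h : Fin m → Fin n) (i0 : Fin m) (v : Fin n) :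
    (∑ i : Fin m, (Finsupp.single (i, h i) 1 : (Fin m × Fin n) →₀ ℕ) (i0, v))
      = if h i0 = v then 1 else 0 := by
  classical
  rw [Finset.sum_eq_single i0]
  · simp [Finsupp.single_apply, Prod.ext_iff]
  · intro b _ hb
    simp [Finsupp.single_apply, Prod.ext_iff, hb]
  · simp

lemma single_sum_deg {m n : ℕ} (h : Fin m → Fin n) :
    ∑ x : Fin m × Fin n, ((∑ i, Finsupp.single (i, h i) 1 : (Fin m × Fin n) →₀ ℕ)) x = m := by
  classical
  simp only [Finsupp.finset_sum_apply]
  rw [Finset.sum_comm]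
  simp [Finsupp.single_apply]

lemma prod_X_eq_monomial {m n : ℕ} (K : Type) [Field K] (h : Fin m → Fin n) :
    (∏ i : Fin m, (X (i, h i) : MvPolynomial (Fin m × Fin n) K))
      = monomial (∑ i, Finsupp.single (i, h i) 1) 1 := by
  rw [monomial_sum_one]
  rfl

/-- if `L(𝔄; k) = L(𝔄)^k` for some `k ≥ 2`, then `𝔄` is a
sublattice of `Hom(P, A₁,…,Aₘ)`: it is closed under pointwise maximum and
pointwise minimum. -/
theorem stmt11 (K : Type) [Field K] (m n : ℕ) (r : Fin m → Fin m → Prop)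
    (hrefl : ∀ i, r i i) (htrans : ∀ i j k, r i j → r j k → r i k)
    (hcompat : ∀ i j, r i j → i ≤ j)
    (A : Fin m → Finset (Fin n)) (hA : ∀ i, (A i).Nonempty)
    (𝔄 : Set (Fin m → Fin n)) (h𝔄ne : 𝔄.Nonempty)
    (hsub : ∀ f ∈ 𝔄, (∀ i, f i ∈ A i) ∧ (∀ i j, r i j → f i ≤ f j))
    (hdown : ∀ f ∈ 𝔄, ∀ g : Fin m → Fin n, (∀ i, g i ∈ A i) →
      (∀ i j, r i j → g i ≤ g j) → (∀ i, g i ≤ f i) → g ∈ 𝔄)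
    (k : ℕ) (hk : 2 ≤ k)
    (heq : Ideal.span {p : MvPolynomial (Fin m × Fin n) K |
        ∃ F : Fin k → (Fin m → Fin n),
          (∀ j, F j ∈ 𝔄) ∧
          (∀ j j' : Fin k, j ≤ j' → ∀ i, F j i ≤ F j' i) ∧
          p = ∏ j : Fin k, ∏ i : Fin m, X (i, F j i)} =
      (Ideal.span ((fun f : Fin m → Fin n =>
        ∏ i : Fin m, (X (i, f i) : MvPolynomial (Fin m × Fin n) K)) '' 𝔄)) ^ k) :
    ∀ f ∈ 𝔄, ∀ g ∈ 𝔄,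
      (fun i => max (f i) (g i)) ∈ 𝔄 ∧ (fun i => min (f i) (g i)) ∈ 𝔄 := by
  classical
  intro f hf g hg
  constructor
  · -- max, via the ideal equality
    set E : (Fin m → Fin n) → ((Fin m × Fin n) →₀ ℕ) :=
      fun h => ∑ i, Finsupp.single (i, h i) 1 with hE
    set d : (Fin m × Fin n) →₀ ℕ := (k - 1) • E f + E g with hd
    -- the monomial U_f^(k-1) * U_g lies in the k-th power
    have hUf : (∏ i : Fin m, (X (i, f i) : MvPolynomial (Fin m × Fin n) K)) ∈
        Ideal.span ((fun f : Fin m → Fin n =>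
          ∏ i : Fin m, (X (i, f i) : MvPolynomial (Fin m × Fin n) K)) '' 𝔄) :=
      Ideal.subset_span ⟨f, hf, rfl⟩
    have hUg : (∏ i : Fin m, (X (i, g i) : MvPolynomial (Fin m × Fin n) K)) ∈
        Ideal.span ((fun f : Fin m → Fin n =>
          ∏ i : Fin m, (X (i, f i) : MvPolynomial (Fin m × Fin n) K)) '' 𝔄) :=
      Ideal.subset_span ⟨g, hg, rfl⟩
    have hMmem : (monomial d (1 : K)) ∈
        (Ideal.span ((fun f : Fin m → Fin n =>
          ∏ i : Fin m, (X (i, f i) : MvPolynomial (Fin m × Fin n) K)) '' 𝔄)) ^ k := by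
      have hMeq : (monomial d (1 : K)) =
          (∏ i : Fin m, (X (i, f i) : MvPolynomial (Fin m × Fin n) K)) ^ (k - 1) *
          (∏ i : Fin m, (X (i, g i) : MvPolynomial (Fin m × Fin n) K)) := by
        rw [prod_X_eq_monomial, prod_X_eq_monomial, monomial_pow, monomial_mul]
        simp [hd, hE]
      rw [hMeq, show k = (k - 1) + 1 by omega, pow_succ]
      exact Ideal.mul_mem_mul (Ideal.pow_mem_pow hUf _) hUg
    rw [← heq] at hMmem
    -- rewrite the generating set as an image of monomials
    have hset : {p : MvPolynomial (Fin m × Fin n) K |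
        ∃ F : Fin k → (Fin m → Fin n),
          (∀ j, F j ∈ 𝔄) ∧
          (∀ j j' : Fin k, j ≤ j' → ∀ i, F j i ≤ F j' i) ∧
          p = ∏ j : Fin k, ∏ i : Fin m, X (i, F j i)} =
        (fun s => monomial s (1 : K)) '' {s : (Fin m × Fin n) →₀ ℕ |
          ∃ F : Fin k → (Fin m → Fin n),
            (∀ j, F j ∈ 𝔄) ∧
            (∀ j j' : Fin k, j ≤ j' → ∀ i, F j i ≤ F j' i) ∧
            s = ∑ j : Fin k, E (F j)} := by
      have key : ∀ F : Fin k → (Fin m → Fin n),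
          (fun s => (monomial s (1 : K))) (∑ j : Fin k, E (F j)) =
            ∏ j : Fin k, ∏ i : Fin m, X (i, F j i) := by
        intro F
        show (monomial (∑ j : Fin k, E (F j)) (1 : K)) = _
        rw [monomial_sum_one]
        exact Finset.prod_congr rfl fun j _ => (prod_X_eq_monomial K (F j)).symm
      ext p
      constructor
      · rintro ⟨F, h1, h2, rfl⟩
        exact ⟨∑ j : Fin k, E (F j), ⟨F, h1, h2, rfl⟩, key F⟩
      · rintro ⟨s, ⟨F, h1, h2, rfl⟩, rfl⟩
        exact ⟨F, h1, h2, key F⟩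
    rw [hset, mem_ideal_span_monomial_image] at hMmem
    obtain ⟨s, ⟨F, hF𝔄, hchain, rfl⟩, hle⟩ := hMmem d (by
      rw [support_monomial]; simp)
    -- degree count forces equality of exponents
    have hptle : ∀ x, (∑ j : Fin k, E (F j)) x ≤ d x := fun x => hle x
    have hdeg : ∑ x : Fin m × Fin n, (∑ j : Fin k, E (F j)) x =
        ∑ x : Fin m × Fin n, d x := by
      have h1 : ∑ x : Fin m × Fin n, (∑ j : Fin k, E (F j)) x = k * m := by
        have : ∑ x : Fin m × Fin n, (∑ j : Fin k, E (F j)) x =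
            ∑ j : Fin k, ∑ x : Fin m × Fin n, (E (F j)) x := by
          simp only [Finsupp.finset_sum_apply]
          exact Finset.sum_comm
        rw [this]
        rw [Finset.sum_congr rfl fun j _ => single_sum_deg (F j)]
        simp [mul_comm]
      have h2 : ∑ x : Fin m × Fin n, d x = (k - 1) * m + m := by
        show ∑ x : Fin m × Fin n,
          ((k - 1) • (∑ i, Finsupp.single (i, f i) 1)
            + ∑ i, Finsupp.single (i, g i) 1 : (Fin m × Fin n) →₀ ℕ) x = _
        simp only [Finsupp.add_apply, Finsupp.smul_apply, smul_eq_mul,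
          Finset.sum_add_distrib, ← Finset.mul_sum]
        rw [single_sum_deg, single_sum_deg]
      rw [h1, h2]
      obtain ⟨k', rfl⟩ : ∃ k', k = k' + 1 := ⟨k - 1, by omega⟩
      simp [Nat.add_sub_cancel, add_mul]
    have hpt : ∀ x, (∑ j : Fin k, E (F j)) x = d x := by
      have := (Finset.sum_eq_sum_iff_of_le (fun x _ => hptle x)).mp hdeg
      exact fun x => this x (Finset.mem_univ x)
    -- counting functions
    have hcount : ∀ (i0 : Fin m) (v : Fin n),
        (∑ j : Fin k, if F j i0 = v then 1 else 0) =
          (k - 1) * (if f i0 = v then 1 else 0) + (if g i0 = v then 1 else 0) := by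
      intro i0 v
      have := hpt (i0, v)
      simp only [hE, hd, Finsupp.finset_sum_apply, Finsupp.add_apply, Finsupp.smul_apply,
        smul_eq_mul, single_sum_apply'] at this
      exact this
    have hone : 1 ≤ k - 1 := by omega
    have htop : ∀ j : Fin k, j ≤ ⟨k - 1, by omega⟩ := by
      intro j; exact Fin.mk_le_mk.mpr (by omega) |>.trans_eq rfl
    have hmem2 : ∀ (i0 : Fin m) (j : Fin k), F j i0 = f i0 ∨ F j i0 = g i0 := by
      intro i0 j
      by_contra hc
      push_neg at hc
      have := hcount i0 (F j i0)
      rw [if_neg (fun h => hc.1 h.symm), if_neg (fun h => hc.2 h.symm)] at this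
      have hj : (if F j i0 = F j i0 then 1 else 0) = 1 := by simp
      have : (∑ j' : Fin k, if F j' i0 = F j i0 then 1 else 0) = 0 := by omega
      rw [Finset.sum_eq_zero_iff] at this
      have := this j (Finset.mem_univ j)
      omega
    have hexists : ∀ i0 : Fin m, ∃ j : Fin k, F j i0 = max (f i0) (g i0) := by
      intro i0
      have hpos : 0 < ∑ j : Fin k, if F j i0 = max (f i0) (g i0) then 1 else 0 := by
        rw [hcount i0 (max (f i0) (g i0))]
        rcases max_choice (f i0) (g i0) with h | h <;> rw [h] <;> simp <;> omega
      obtain ⟨j, -, hj⟩ := Finset.exists_ne_zero_of_sum_ne_zero hpos.ne'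
      exact ⟨j, by by_contra hcon; simp [hcon] at hj⟩
    have hFtop : F ⟨k - 1, by omega⟩ = fun i => max (f i) (g i) := by
      funext i0
      obtain ⟨j, hj⟩ := hexists i0
      have h1 : max (f i0) (g i0) ≤ F ⟨k - 1, by omega⟩ i0 := by
        rw [← hj]; exact hchain j _ (htop j) i0
      have h2 : F ⟨k - 1, by omega⟩ i0 ≤ max (f i0) (g i0) := by
        rcases hmem2 i0 ⟨k - 1, by omega⟩ with h | h
        · rw [h]; exact le_max_left _ _
        · rw [h]; exact le_max_right _ _
      exact le_antisymm h2 h1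
    rw [← hFtop]
    exact hF𝔄 _
  · -- min, via downward closedness
    refine hdown f hf _ ?_ ?_ ?_
    · intro i
      rcases min_choice (f i) (g i) with h | h
      · rw [h]; exact (hsub f hf).1 i
      · rw [h]; exact (hsub g hg).1 i
    · intro i j hij
      exact min_le_min ((hsub f hf).2 i j hij) ((hsub g hg).2 i j hij)
    · intro i
      exact min_le_left _ _
end

section
/- Let P, A, 𝔄 be as in the standing conventions. If 𝔄 (a poset ideal of Hom(P,A)) has a unique maximal element, then there exist subsets B_i ⊆ A_i such that 𝔄 = Hom(P, B_1,...,B_m), the set of all isotone maps f : P → [n] with f(p_i) ∈ B_i for all i. -/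
/-!
In a finite poset every element of a set lies below some maximal element of it, so a unique
maximal element `g` of `𝔄` is its greatest element. Being a down-set of `Hom(P, A)`, `𝔄` is then
the set of isotone maps `f ≤ g` with `f(pᵢ) ∈ Aᵢ`, i.e. `Hom(P, B)` for `Bᵢ = {x ∈ Aᵢ | x ≤ g(pᵢ)}`.
-/

theorem le_of_forall_maximal_eq {α : Type*} [Preorder α] [Finite α] {s : Set α} {a g : α}
    (hg : ∀ b, Maximal (· ∈ s) b → b = g) (ha : a ∈ s) : a ≤ g := by
  obtain ⟨b, hab, hb⟩ := Finite.exists_le_maximal (p := (· ∈ s)) ha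
  exact hg b hb ▸ hab

theorem stmt12_general (m n : ℕ) (r : Fin m → Fin m → Prop)
    (A : Fin m → Finset (Fin n))
    (𝔄 : Set (Fin m → Fin n))
    (hsub : ∀ f ∈ 𝔄, (∀ i, f i ∈ A i) ∧ (∀ i j, r i j → f i ≤ f j))
    (hdown : ∀ f ∈ 𝔄, ∀ g : Fin m → Fin n, (∀ i, g i ∈ A i) →
      (∀ i j, r i j → g i ≤ g j) → (∀ i, g i ≤ f i) → g ∈ 𝔄)
    (huniq : ∃! g, g ∈ 𝔄 ∧ ∀ f ∈ 𝔄, (∀ i, g i ≤ f i) → f = g) :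
    ∃ B : Fin m → Finset (Fin n), (∀ i, B i ⊆ A i) ∧
      𝔄 = {f : Fin m → Fin n |
        (∀ i, f i ∈ B i) ∧ ∀ i j, r i j → f i ≤ f j} := by
  obtain ⟨g, ⟨hg𝔄, -⟩, hguniq⟩ := huniq
  have hle : ∀ f ∈ 𝔄, f ≤ g := fun f hf =>
    le_of_forall_maximal_eq
      (fun b hb => hguniq b ⟨hb.1, fun f hf hbf => le_antisymm (hb.2 hf hbf) hbf⟩) hf
  refine ⟨fun i => {x ∈ A i | x ≤ g i}, fun i => Finset.filter_subset _ _, ?_⟩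
  ext f
  refine ⟨fun hf => ⟨fun i => Finset.mem_filter.2 ⟨(hsub f hf).1 i, hle f hf i⟩, (hsub f hf).2⟩, ?_⟩
  rintro ⟨hB, hiso⟩
  exact hdown g hg𝔄 f (fun i => (Finset.mem_filter.1 (hB i)).1) hiso
    (fun i => (Finset.mem_filter.1 (hB i)).2)

/-- if the poset ideal `𝔄` of `Hom(P,A)` has a unique maximal
element, then there exist subsets `Bᵢ ⊆ Aᵢ` such that `𝔄` is the set of all
isotone maps `f` with `f(pᵢ) ∈ Bᵢ` for all `i`. -/
theorem stmt12 (m n : ℕ) (r : Fin m → Fin m → Prop)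
    (hrefl : ∀ i, r i i) (htrans : ∀ i j k, r i j → r j k → r i k)
    (hcompat : ∀ i j, r i j → i ≤ j)
    (A : Fin m → Finset (Fin n)) (hA : ∀ i, (A i).Nonempty)
    (𝔄 : Set (Fin m → Fin n)) (h𝔄ne : 𝔄.Nonempty)
    (hsub : ∀ f ∈ 𝔄, (∀ i, f i ∈ A i) ∧ (∀ i j, r i j → f i ≤ f j))
    (hdown : ∀ f ∈ 𝔄, ∀ g : Fin m → Fin n, (∀ i, g i ∈ A i) →
      (∀ i j, r i j → g i ≤ g j) → (∀ i, g i ≤ f i) → g ∈ 𝔄)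
    (huniq : ∃! g, g ∈ 𝔄 ∧ ∀ f ∈ 𝔄, (∀ i, g i ≤ f i) → f = g) :
    ∃ B : Fin m → Finset (Fin n), (∀ i, B i ⊆ A i) ∧
      𝔄 = {f : Fin m → Fin n |
        (∀ i, f i ∈ B i) ∧ ∀ i j, r i j → f i ≤ f j} :=
  stmt12_general m n r A 𝔄 hsub hdown huniq
end

section
/- Let P be a finite poset with linear extension p_1,...,p_m and B_i ⊆ [n] nonempty subsets such that 𝔄 = Hom(P, B_1,...,B_m). Then for every k ≥ 1, L(𝔄)^k = L(𝔄; k); that is, every product U_{g_1}⋯U_{g_k} with g_1,...,g_k ∈ 𝔄 equals U_{f_1}⋯U_{f_k} for some chain f_1 ≤ f_2 ≤ ⋯ ≤ f_k in 𝔄. -/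
/-! Sorting each coordinate separately turns any family `g₁, …, g_k` in `Hom(P, B₁, …, Bₘ)` into a
chain `f₁ ≤ ⋯ ≤ f_k`: the values at `pᵢ` are only permuted, so the monomial `U_{g₁} ⋯ U_{g_k}` and
the constraints `f(pᵢ) ∈ Bᵢ` are unchanged, and isotonicity survives because the `ℓ`-th order
statistic is monotone under pointwise comparison of tuples. Hence the generators of `L(𝔄)^k`,
the products of `k` generators of `L(𝔄)`, are exactly the products along `k`-chains. -/

open MvPolynomial

open Finset in
/-- The `j`-th order statistic is `≤ c` iff more than `j` entries are `≤ c`, and raising the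
entries can only lower these counts. -/
theorem Tuple.comp_sort_le_comp_sort {k : ℕ} {α : Type*} [LinearOrder α] {a b : Fin k → α}
    (hab : a ≤ b) : a ∘ sort a ≤ b ∘ sort b := by
  intro j
  set c := (b ∘ sort b) j
  have count_comp_sort (f : Fin k → α) : #{i | (f ∘ sort f) i ≤ c} = #{i | f i ≤ c} :=
    card_equiv (sort f) (by simp)
  have count_le : #{i | b i ≤ c} ≤ #{i | a i ≤ c} :=
    card_le_card (monotone_filter_right _ fun i _ h => (hab i).trans h)
  rw [← lt_card_le_iff_apply_le_of_monotone (monotone_sort a), count_comp_sort]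
  calc (j : ℕ) < #{i | (b ∘ sort b) i ≤ c} :=
        (lt_card_le_iff_apply_le_of_monotone (monotone_sort b)).2 le_rfl
    _ = #{i | b i ≤ c} := count_comp_sort b
    _ ≤ #{i | a i ≤ c} := count_le

theorem Ideal.span_image_pow {R ι : Type*} [CommSemiring R] (U : ι → R) (A : Set ι) (k : ℕ) :
    Ideal.span (U '' A) ^ k =
      Ideal.span {p | ∃ G : Fin k → ι, (∀ j, G j ∈ A) ∧ p = ∏ j, U (G j)} := by
  rw [Ideal.span, Submodule.span_pow]
  congr 1
  ext p
  simp only [Set.mem_pow_iff_prod, Set.mem_image, Set.mem_ofPred_eq]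
  constructor
  · rintro ⟨f, hf, rfl⟩
    choose G hGA hGf using hf
    exact ⟨G, hGA, by simp only [hGf]⟩
  · rintro ⟨G, hGA, rfl⟩
    exact ⟨fun j => U (G j), fun j => ⟨G j, hGA j, rfl⟩, rfl⟩

/-- `coordSort G j i` is the `j`-th smallest of the values `G 0 i, …, G (k - 1) i`. -/
def coordSort {k : ℕ} {ι α : Type*} [LinearOrder α] (G : Fin k → ι → α) : Fin k → ι → α :=
  fun j i => G (Tuple.sort (fun ℓ => G ℓ i) j) i

/-- For a poset `P = {p₁, …, pₘ}` with order `r`, `homSet r B` is `Hom(P, B₁, …, Bₘ)`. -/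
def homSet {ι α : Type*} [LE α] (r : ι → ι → Prop) (B : ι → Set α) : Set (ι → α) :=
  {f | (∀ i, f i ∈ B i) ∧ ∀ i i', r i i' → f i ≤ f i'}

section coordSort

variable {k : ℕ} {ι α : Type*} [LinearOrder α] (G : Fin k → ι → α)

theorem monotone_coordSort : Monotone (coordSort G) :=
  fun _ _ hjj' i => Tuple.monotone_sort (fun ℓ => G ℓ i) hjj'

theorem coordSort_le_coordSort {i i' : ι} (h : ∀ ℓ, G ℓ i ≤ G ℓ i') (j : Fin k) :
    coordSort G j i ≤ coordSort G j i' :=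
  Tuple.comp_sort_le_comp_sort h j

theorem coordSort_mem_homSet {r : ι → ι → Prop} {B : ι → Set α} (hG : ∀ ℓ, G ℓ ∈ homSet r B)
    (j : Fin k) : coordSort G j ∈ homSet r B :=
  ⟨fun i => (hG _).1 i, fun _ _ hr => coordSort_le_coordSort G (fun ℓ => (hG ℓ).2 _ _ hr) j⟩

theorem prod_prod_coordSort {M : Type*} [CommMonoid M] [Fintype ι] (u : ι → α → M) :
    ∏ j, ∏ i, u i (coordSort G j i) = ∏ j, ∏ i, u i (G j i) := by
  rw [Finset.prod_comm, Finset.prod_comm (γ := Fin k)]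
  exact Finset.prod_congr rfl fun i _ =>
    Equiv.prod_comp (Tuple.sort fun ℓ => G ℓ i) (fun ℓ => u i (G ℓ i))

theorem exists_monotone_prod_prod_eq {M : Type*} [CommMonoid M] [Fintype ι]
    {r : ι → ι → Prop} {B : ι → Set α} (hG : ∀ ℓ, G ℓ ∈ homSet r B) (u : ι → α → M) :
    ∃ F : Fin k → ι → α, (∀ j, F j ∈ homSet r B) ∧ Monotone F ∧
      ∏ j, ∏ i, u i (G j i) = ∏ j, ∏ i, u i (F j i) :=
  ⟨coordSort G, coordSort_mem_homSet G hG, monotone_coordSort G, (prod_prod_coordSort G u).symm⟩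

end coordSort

theorem stmt13_general (K : Type) [Field K] (m n : ℕ) (r : Fin m → Fin m → Prop)
    (B : Fin m → Finset (Fin n))
    (𝔄 : Set (Fin m → Fin n))
    (h𝔄 : 𝔄 = {f : Fin m → Fin n |
      (∀ i, f i ∈ B i) ∧ ∀ i j, r i j → f i ≤ f j})
    (k : ℕ) :
    ((Ideal.span ((fun f : Fin m → Fin n =>
        ∏ i : Fin m, (X (i, f i) : MvPolynomial (Fin m × Fin n) K)) '' 𝔄)) ^ k =
      Ideal.span {p : MvPolynomial (Fin m × Fin n) K |
        ∃ F : Fin k → (Fin m → Fin n),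
          (∀ j, F j ∈ 𝔄) ∧
          (∀ j j' : Fin k, j ≤ j' → ∀ i, F j i ≤ F j' i) ∧
          p = ∏ j : Fin k, ∏ i : Fin m, X (i, F j i)}) ∧
    ∀ G : Fin k → (Fin m → Fin n), (∀ j, G j ∈ 𝔄) →
      ∃ F : Fin k → (Fin m → Fin n),
        (∀ j, F j ∈ 𝔄) ∧
        (∀ j j' : Fin k, j ≤ j' → ∀ i, F j i ≤ F j' i) ∧
        (∏ j : Fin k, ∏ i : Fin m, (X (i, G j i) : MvPolynomial (Fin m × Fin n) K)) =
          ∏ j : Fin k, ∏ i : Fin m, X (i, F j i) := by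
  replace h𝔄 : 𝔄 = homSet r fun i => (B i : Set (Fin n)) := h𝔄
  subst h𝔄
  have chain (G : Fin k → Fin m → Fin n)
      (hG : ∀ j, G j ∈ homSet r fun i => (B i : Set (Fin n))) :=
    exists_monotone_prod_prod_eq G hG fun i a => (X (i, a) : MvPolynomial (Fin m × Fin n) K)
  refine ⟨?_, chain⟩
  rw [Ideal.span_image_pow]
  congr 1
  ext p
  constructor
  · rintro ⟨G, hG, rfl⟩
    exact chain G hG
  · rintro ⟨F, hF, -, rfl⟩
    exact ⟨F, hF, rfl⟩

/-- if `𝔄 = Hom(P, B₁,…,Bₘ)`, then for every `k ≥ 1` one has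
`L(𝔄)^k = L(𝔄; k)`; moreover every product `U_{g₁}⋯U_{g_k}` with `gⱼ ∈ 𝔄`
equals `U_{f₁}⋯U_{f_k}` for some weakly increasing chain `f₁ ≤ ⋯ ≤ f_k` in `𝔄`. -/
theorem stmt13 (K : Type) [Field K] (m n : ℕ) (r : Fin m → Fin m → Prop)
    (hrefl : ∀ i, r i i) (htrans : ∀ i j k, r i j → r j k → r i k)
    (hcompat : ∀ i j, r i j → i ≤ j)
    (B : Fin m → Finset (Fin n)) (hB : ∀ i, (B i).Nonempty)
    (𝔄 : Set (Fin m → Fin n))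
    (h𝔄 : 𝔄 = {f : Fin m → Fin n |
      (∀ i, f i ∈ B i) ∧ ∀ i j, r i j → f i ≤ f j})
    (k : ℕ) (hk : 1 ≤ k) :
    ((Ideal.span ((fun f : Fin m → Fin n =>
        ∏ i : Fin m, (X (i, f i) : MvPolynomial (Fin m × Fin n) K)) '' 𝔄)) ^ k =
      Ideal.span {p : MvPolynomial (Fin m × Fin n) K |
        ∃ F : Fin k → (Fin m → Fin n),
          (∀ j, F j ∈ 𝔄) ∧
          (∀ j j' : Fin k, j ≤ j' → ∀ i, F j i ≤ F j' i) ∧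
          p = ∏ j : Fin k, ∏ i : Fin m, X (i, F j i)}) ∧
    ∀ G : Fin k → (Fin m → Fin n), (∀ j, G j ∈ 𝔄) →
      ∃ F : Fin k → (Fin m → Fin n),
        (∀ j, F j ∈ 𝔄) ∧
        (∀ j j' : Fin k, j ≤ j' → ∀ i, F j i ≤ F j' i) ∧
        (∏ j : Fin k, ∏ i : Fin m, (X (i, G j i) : MvPolynomial (Fin m × Fin n) K)) =
          ∏ j : Fin k, ∏ i : Fin m, X (i, F j i) :=
  stmt13_general K m n r B 𝔄 h𝔄 k
end

section
/- Let g_1,...,g_k be isotone maps P → [n] with g_j(p_i) ∈ B_i, where max(B_i) ≤ min(B_j) need not hold, and any map h : P → [n] with h(p_i) ∈ B_i is automatically isotone (i.e., B_i's are 'order-compatible'). Define f_ℓ(p_i) to be the ℓ-th smallest element of the multiset {g_1(p_i),...,g_k(p_i)}. Then each f_ℓ is isotone and f_1 ≤ f_2 ≤ ⋯ ≤ f_k pointwise. -/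
/-- The `ℓ`-th smallest element (0-indexed) of the multiset
`{g 0 i, …, g (k-1) i}`. -/
noncomputable def nthSmallest (m n k : ℕ) (hn : 0 < n)
    (g : Fin k → (Fin m → Fin n)) (i : Fin m) (ℓ : ℕ) : Fin n :=
  (Multiset.sort
    (Multiset.map (fun t => g t i) (Finset.univ : Finset (Fin k)).val) (· ≤ ·)).getD ℓ
    ⟨0, hn⟩

/-!
The `ℓ`-th smallest entry of a sorted list is at most `y` exactly when more than `ℓ` entries
are at most `y`. If `g t i ≤ g t j` for every `t`, then every threshold `y` has at least as
many of the values `g t i` below it as of the values `g t j`, so the `ℓ`-th smallest value at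
`i` is at most the `ℓ`-th smallest value at `j`; applied along `r` this is isotonicity. That
`ℓ ↦ f_ℓ` is increasing is just sortedness.
-/

namespace List

variable {α : Type*} [LinearOrder α] {l l₁ l₂ : List α} {i : ℕ}

theorem SortedLE.getElem_le_iff_lt_countP (hl : l.SortedLE) (hi : i < l.length) (y : α) :
    l[i] ≤ y ↔ i < l.countP (· ≤ y) := by
  constructor
  · intro hiy
    have hprefix : ∀ x ∈ l.take (i + 1), x ≤ y := by
      intro x hx
      obtain ⟨j, hj, rfl⟩ := getElem_of_mem hx
      rw [getElem_take]
      exact (hl.getElem_le_getElem_of_le (by simp at hj; omega)).trans hiy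
    calc i < (l.take (i + 1)).countP (· ≤ y) := by
          rw [countP_eq_length.2 (by simpa using hprefix), length_take]; omega
      _ ≤ l.countP (· ≤ y) := (take_sublist _ _).countP_le
  · intro hcount
    by_contra! hyi
    have hsuffix : (l.drop i).countP (· ≤ y) = 0 := by
      refine countP_eq_zero.2 fun x hx => ?_
      obtain ⟨j, hj, rfl⟩ := getElem_of_mem hx
      rw [getElem_drop]
      simpa using hyi.trans_le (hl.getElem_le_getElem_of_le (by omega))
    have hcount_le : l.countP (· ≤ y) ≤ i := by
      rw [← take_append_drop i l, countP_append, hsuffix]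
      exact countP_le_length.trans (length_take_le _ _)
    omega

theorem SortedLE.getElem_le_getElem_of_countP_le (h₁ : l₁.SortedLE) (h₂ : l₂.SortedLE)
    (hcount : ∀ y, l₂.countP (· ≤ y) ≤ l₁.countP (· ≤ y))
    (hi₁ : i < l₁.length) (hi₂ : i < l₂.length) : l₁[i] ≤ l₂[i] :=
  (h₁.getElem_le_iff_lt_countP hi₁ _).2 <|
    ((h₂.getElem_le_iff_lt_countP hi₂ _).1 le_rfl).trans_le (hcount _)

end List

namespace Multiset

variable {ι α : Type*} [LinearOrder α]

theorem countP_sort (s : Multiset α) (p : α → Prop) [DecidablePred p] :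
    s.sort.countP (p ·) = s.countP p := by
  rw [← coe_countP, sort_eq]

theorem countP_map_le_countP_map_of_le {s : Multiset ι} {f g : ι → α} (hfg : f ≤ g) (y : α) :
    (s.map g).countP (· ≤ y) ≤ (s.map f).countP (· ≤ y) := by
  rw [countP_map, countP_map]
  exact card_le_card (monotone_filter_right s fun a hga => (hfg a).trans hga)

end Multiset

section nthSmallest

variable {m n k : ℕ} (hn : 0 < n) (g : Fin k → Fin m → Fin n)

theorem nthSmallest_eq_getElem (i : Fin m) {ℓ : ℕ} (hℓ : ℓ < k) :
    nthSmallest m n k hn g i ℓ =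
      ((Finset.univ.val.map (g · i)).sort)[ℓ]'(by simpa using hℓ) :=
  List.getD_eq_getElem _ _ _

theorem nthSmallest_le_nthSmallest_of_forall_le {i j : Fin m} (hij : ∀ t, g t i ≤ g t j)
    {ℓ : ℕ} (hℓ : ℓ < k) : nthSmallest m n k hn g i ℓ ≤ nthSmallest m n k hn g j ℓ := by
  rw [nthSmallest_eq_getElem hn g i hℓ, nthSmallest_eq_getElem hn g j hℓ]
  refine (Multiset.pairwise_sort _ _).sortedLE.getElem_le_getElem_of_countP_le
    (Multiset.pairwise_sort _ _).sortedLE (fun y => ?_) _ _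
  simp only [Multiset.countP_sort]
  exact Multiset.countP_map_le_countP_map_of_le hij y

theorem nthSmallest_le_nthSmallest_of_le (i : Fin m) {ℓ ℓ' : ℕ} (hℓℓ' : ℓ ≤ ℓ') (hℓ' : ℓ' < k) :
    nthSmallest m n k hn g i ℓ ≤ nthSmallest m n k hn g i ℓ' := by
  rw [nthSmallest_eq_getElem hn g i (hℓℓ'.trans_lt hℓ'), nthSmallest_eq_getElem hn g i hℓ']
  exact (Multiset.pairwise_sort _ _).sortedLE.getElem_le_getElem_of_le hℓℓ'

end nthSmallest

theorem stmt15_general (m n k : ℕ) (hn : 0 < n) (r : Fin m → Fin m → Prop)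
    (g : Fin k → (Fin m → Fin n))
    (hgiso : ∀ t, ∀ i j, r i j → g t i ≤ g t j) :
    (∀ ℓ : ℕ, ℓ < k → ∀ i j, r i j →
      nthSmallest m n k hn g i ℓ ≤ nthSmallest m n k hn g j ℓ) ∧
    (∀ ℓ ℓ' : ℕ, ℓ ≤ ℓ' → ℓ' < k → ∀ i,
      nthSmallest m n k hn g i ℓ ≤ nthSmallest m n k hn g i ℓ') :=
  ⟨fun _ hℓ i j hij => nthSmallest_le_nthSmallest_of_forall_le hn g (fun t => hgiso t i j hij) hℓ,
    fun _ _ hℓℓ' hℓ' i => nthSmallest_le_nthSmallest_of_le hn g i hℓℓ' hℓ'⟩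

/-- if every map `h` with `h(pᵢ) ∈ Bᵢ` is automatically isotone,
and `g₁,…,g_k` are isotone maps with values `g_t(pᵢ) ∈ Bᵢ`, then the maps
`f_ℓ(pᵢ) :=` the `ℓ`-th smallest element of `{g₁(pᵢ),…,g_k(pᵢ)}` are isotone
and form a weakly increasing chain `f₁ ≤ f₂ ≤ ⋯ ≤ f_k`. -/
theorem stmt15 (m n k : ℕ) (hn : 0 < n) (r : Fin m → Fin m → Prop)
    (hrefl : ∀ i, r i i) (htrans : ∀ i j l, r i j → r j l → r i l)
    (hcompat : ∀ i j, r i j → i ≤ j)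
    (B : Fin m → Finset (Fin n)) (hB : ∀ i, (B i).Nonempty)
    (hauto : ∀ h : Fin m → Fin n, (∀ i, h i ∈ B i) →
      ∀ i j, r i j → h i ≤ h j)
    (g : Fin k → (Fin m → Fin n))
    (hgB : ∀ t i, g t i ∈ B i)
    (hgiso : ∀ t, ∀ i j, r i j → g t i ≤ g t j) :
    (∀ ℓ : ℕ, ℓ < k → ∀ i j, r i j →
      nthSmallest m n k hn g i ℓ ≤ nthSmallest m n k hn g j ℓ) ∧
    (∀ ℓ ℓ' : ℕ, ℓ ≤ ℓ' → ℓ' < k → ∀ i,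
      nthSmallest m n k hn g i ℓ ≤ nthSmallest m n k hn g i ℓ') :=
  stmt15_general m n k hn r g hgiso
end

section
/- Let P be a finite poset with linear extension p_1,...,p_m, B_i ⊆ [n] nonempty subsets, V' = {(p_i,a) : a ∈ B_i}, 𝔄 a poset ideal of Hom(P, B_1,...,B_m) such that every b ∈ B_i is attained as f(p_i) for some f ∈ 𝔄, and Δ(𝔄) the simplicial complex on V' with facets V' ∖ Γf for f ∈ 𝔄. If for every codimension-1 face G of Δ(𝔄) there are exactly two facets containing G (i.e., Δ(𝔄) is a pseudomanifold without boundary), then max(B_i) ≤ min(B_j) whenever p_i < p_j, and 𝔄 = Hom(P, B_1,...,B_m). -/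
/-- let `Δ(𝔄)` be the complex on `V' = {(pᵢ,b) : b ∈ Bᵢ}` with
facets `V' ∖ Γf`, `f ∈ 𝔄`, where `𝔄` is a poset ideal of `Hom(P,B₁,…,Bₘ)`
such that every `b ∈ Bᵢ` is attained as `f(pᵢ)` for some `f ∈ 𝔄`.  If every
codimension-1 face of `Δ(𝔄)` lies in exactly two facets, then
`max Bᵢ ≤ min Bⱼ` whenever `pᵢ < pⱼ`, and `𝔄 = Hom(P,B₁,…,Bₘ)`. -/
theorem stmt19 (m n : ℕ) (r : Fin m → Fin m → Prop)
    (hrefl : ∀ i, r i i) (htrans : ∀ i j k, r i j → r j k → r i k)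
    (hcompat : ∀ i j, r i j → i ≤ j)
    (B : Fin m → Finset (Fin n)) (hB : ∀ i, (B i).Nonempty)
    (𝔄 : Set (Fin m → Fin n)) (h𝔄ne : 𝔄.Nonempty)
    (hsub : ∀ f ∈ 𝔄, (∀ i, f i ∈ B i) ∧ (∀ i j, r i j → f i ≤ f j))
    (hdown : ∀ f ∈ 𝔄, ∀ g : Fin m → Fin n, (∀ i, g i ∈ B i) →
      (∀ i j, r i j → g i ≤ g j) → (∀ i, g i ≤ f i) → g ∈ 𝔄)
    (hattain : ∀ i, ∀ b ∈ B i, ∃ f ∈ 𝔄, f i = b)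
    (hpseudo : ∀ G : Finset (Fin m × Fin n),
      G ⊆ Finset.univ.filter (fun x : Fin m × Fin n => x.2 ∈ B x.1) →
      ((Finset.univ.filter (fun x : Fin m × Fin n => x.2 ∈ B x.1)) \ G).card
        = m + 1 →
      (∃ f ∈ 𝔄, G ⊆
        (Finset.univ.filter (fun x : Fin m × Fin n => x.2 ∈ B x.1)).filter
          (fun x => x.2 ≠ f x.1)) →
      Set.ncard {f | f ∈ 𝔄 ∧ G ⊆
        (Finset.univ.filter (fun x : Fin m × Fin n => x.2 ∈ B x.1)).filter
          (fun x => x.2 ≠ f x.1)} = 2) :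
    (∀ i j, r i j → i ≠ j → ∀ a ∈ B i, ∀ b ∈ B j, a ≤ b) ∧
    𝔄 = {f : Fin m → Fin n |
      (∀ i, f i ∈ B i) ∧ ∀ i j, r i j → f i ≤ f j} := by
  classical
  set V : Finset (Fin m × Fin n) :=
    Finset.univ.filter (fun x : Fin m × Fin n => x.2 ∈ B x.1) with hV
  -- Key step from the pseudomanifold property: 𝔄 is closed under changing
  -- one coordinate to any other value in the corresponding Bᵢ.
  have key : ∀ f ∈ 𝔄, ∀ (i : Fin m) (b : Fin n), b ∈ B i →
      Function.update f i b ∈ 𝔄 := by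
    intro f hf i b hb
    by_cases hbe : b = f i
    · simpa [hbe, Function.update_eq_self] using hf
    have hfB : ∀ j, f j ∈ B j := (hsub f hf).1
    set Γ : Finset (Fin m × Fin n) := Finset.univ.image (fun j => (j, f j)) with hΓ
    have hiΓ : (i, b) ∉ Γ := by
      simp only [hΓ, Finset.mem_image]
      rintro ⟨j, -, hj⟩
      obtain ⟨rfl, h2⟩ := Prod.ext_iff.1 hj
      exact hbe h2.symm
    set S : Finset (Fin m × Fin n) := insert (i, b) Γ with hS
    have hSV : S ⊆ V := by
      intro x hx
      simp only [hS, Finset.mem_insert, hΓ, Finset.mem_image] at hx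
      rcases hx with rfl | ⟨j, -, rfl⟩ <;> simp [hV, hb, hfB]
    have hScard : S.card = m + 1 := by
      rw [hS, Finset.card_insert_of_notMem hiΓ, hΓ,
        Finset.card_image_of_injective _ (fun a b h => (Prod.ext_iff.1 h).1),
        Finset.card_univ, Fintype.card_fin]
    set G : Finset (Fin m × Fin n) := V \ S with hG
    have hGsub : G ⊆ V := Finset.sdiff_subset
    have hVG : V \ G = S := by
      rw [hG, Finset.sdiff_sdiff_self_left, Finset.inter_eq_right.2 hSV]
    have hmemG : ∀ x : Fin m × Fin n,
        x ∈ G ↔ x ∈ V ∧ x ≠ (i, b) ∧ ∀ j, x ≠ (j, f j) := by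
      intro x
      simp only [hG, Finset.mem_sdiff, hS, Finset.mem_insert, hΓ, Finset.mem_image]
      constructor
      · rintro ⟨hx, hx2⟩
        push_neg at hx2
        exact ⟨hx, hx2.1, fun j h => hx2.2 j (Finset.mem_univ j) h.symm⟩
      · rintro ⟨hx, h1, h2⟩
        refine ⟨hx, ?_⟩
        push_neg
        exact ⟨h1, fun j _ h => h2 j h.symm⟩
    have hGf : G ⊆ V.filter (fun x => x.2 ≠ f x.1) := by
      intro x hx
      obtain ⟨hxV, -, h2⟩ := (hmemG x).1 hx
      exact Finset.mem_filter.2 ⟨hxV, fun he => h2 x.1 (Prod.ext rfl he)⟩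
    have hcount := hpseudo G hGsub (by rw [hVG]; exact hScard) ⟨f, hf, hGf⟩
    by_contra hu
    have hTf : {g | g ∈ 𝔄 ∧ G ⊆ V.filter (fun x => x.2 ≠ g x.1)} = {f} := by
      ext g
      simp only [Set.mem_setOf_eq, Set.mem_singleton_iff]
      constructor
      · rintro ⟨hg, hgG⟩
        have hgB : ∀ j, g j ∈ B j := (hsub g hg).1
        have halt : ∀ j, (j = i ∧ g j = b) ∨ g j = f j := by
          intro j
          have hjV : (j, g j) ∈ V := by simp [hV, hgB]
          have hjG : (j, g j) ∉ G := fun hm =>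
            (Finset.mem_filter.1 (hgG hm)).2 rfl
          by_cases h1 : (j, g j) = (i, b)
          · exact Or.inl ⟨(Prod.ext_iff.1 h1).1, (Prod.ext_iff.1 h1).2⟩
          · right
            by_contra h2
            refine hjG ((hmemG _).2 ⟨hjV, h1, fun k hk => ?_⟩)
            obtain ⟨h3, h4⟩ := Prod.ext_iff.1 hk
            subst h3
            exact h2 h4
        by_cases hgi : g i = f i
        · funext j
          rcases halt j with ⟨rfl, h2⟩ | h
          · exact absurd (h2 ▸ hgi) hbe
          · exact h
        · exfalso
          apply hu
          have hge : g = Function.update f i b := by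
            funext j
            rcases halt j with ⟨rfl, h2⟩ | h
            · rw [Function.update_self]; exact h2
            · by_cases hji : j = i
              · subst hji; exact absurd h hgi
              · rw [Function.update_of_ne hji]; exact h
          exact hge ▸ hg
      · rintro rfl
        exact ⟨hf, hGf⟩
    rw [hTf, Set.ncard_singleton] at hcount
    omega
  -- every function with values in the Bᵢ belongs to 𝔄
  have mem𝔄 : ∀ g : Fin m → Fin n, (∀ i, g i ∈ B i) → g ∈ 𝔄 := by
    intro g hg
    obtain ⟨f0, hf0⟩ := h𝔄ne
    have hstep : ∀ k : ℕ,
        (fun j : Fin m => if (j : ℕ) < k then g j else f0 j) ∈ 𝔄 := by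
      intro k
      induction k with
      | zero => simpa using hf0
      | succ k ih =>
        by_cases hk : k < m
        · have hkey := key _ ih ⟨k, hk⟩ (g ⟨k, hk⟩) (hg _)
          convert hkey using 1
          funext j
          by_cases hjk : (j : ℕ) = k
          · have hj : j = (⟨k, hk⟩ : Fin m) := Fin.ext hjk
            subst hj
            simp
          · have hne : j ≠ (⟨k, hk⟩ : Fin m) := fun h => hjk (congrArg Fin.val h)
            rw [Function.update_of_ne hne]
            by_cases hlt : (j : ℕ) < k
            · simp [hlt, Nat.lt_succ_of_lt hlt]
            · simp [hlt, show ¬((j : ℕ) < k + 1) by omega]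
        · have hkm : ∀ j : Fin m, (j : ℕ) < k :=
            fun j => lt_of_lt_of_le j.2 (le_of_not_gt hk)
          convert ih using 1
          funext j
          simp [hkm j, Nat.lt_succ_of_lt (hkm j)]
    have hgeq : g = fun j : Fin m => if (j : ℕ) < m then g j else f0 j := by
      funext j; simp [j.2]
    exact hgeq ▸ hstep m
  constructor
  · intro i j hr hij a ha b hb
    obtain ⟨f0, hf0⟩ := h𝔄ne
    set u := Function.update (Function.update f0 i a) j b with hu
    have huB : ∀ k, u k ∈ B k := by
      intro k
      by_cases hkj : k = j
      · subst hkj; rw [hu, Function.update_self]; exact hb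
      · by_cases hki : k = i
        · subst hki
          rw [hu, Function.update_of_ne hij, Function.update_self]; exact ha
        · rw [hu, Function.update_of_ne hkj, Function.update_of_ne hki]
          exact (hsub f0 hf0).1 k
    have hu𝔄 := mem𝔄 u huB
    have hle := (hsub u hu𝔄).2 i j hr
    rwa [hu, Function.update_of_ne hij, Function.update_self,
      Function.update_self] at hle
  · ext g
    constructor
    · exact fun hg => hsub g hg
    · rintro ⟨h1, h2⟩
      exact mem𝔄 g h1
end
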